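/- arXiv:1410.2588 — 5 statements merged into one kernel-verified Lean document; each statement's English description precedes it below -/
import Mathlib

section
/- Let p ∈ (1,∞] and let ρ ∈ L^p(0,1) satisfy ρ(x) > 0 for a.e. x ∈ (0,1). Then for every ε > 0 there exists a constant C_ε > 0 such that for all u ∈ H¹(0,1): ‖u‖_{L^∞(0,1)}² ≤ ε ‖u'‖_{L²(0,1)}² + C_ε ∫₀¹ u(x)² ρ(x) dx. -/
open MeasureTheory Set Filter Topology

lemma my_cs {ν : Measure ℝ} [IsFiniteMeasure ν] {f : ℝ → ℝ}
    (hf0 : 0 ≤ᵐ[ν] f) (hf : MemLp f 2 ν) :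
    (∫ t, f t ∂ν) ^ 2 ≤ (ν Set.univ).toReal * ∫ t, f t ^ 2 ∂ν := by
  have hconj : Real.HolderConjugate 2 2 := Real.HolderConjugate.two_two
  have h1 : MemLp (fun _ : ℝ => (1:ℝ)) (ENNReal.ofReal 2) ν := by
    simpa [ENNReal.ofReal_ofNat] using (memLp_const (μ := ν) (1:ℝ) (p := 2))
  have hf' : MemLp f (ENNReal.ofReal 2) ν := by
    simpa [ENNReal.ofReal_ofNat] using hf
  have key := integral_mul_le_Lp_mul_Lq_of_nonneg hconj hf0
    (Filter.Eventually.of_forall (fun x => zero_le_one)) hf' h1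
  have hsq : ∀ x : ℝ, x ^ (2:ℝ) = x ^ (2:ℕ) := fun x => by
    rw [show (2:ℝ) = ((2:ℕ):ℝ) by norm_num, Real.rpow_natCast]
  simp only [mul_one, hsq, one_pow] at key
  have hint1 : (∫ _ : ℝ, (1:ℝ) ∂ν) = (ν Set.univ).toReal := by
    simp [integral_const]
    rfl
  rw [hint1] at key
  have hAnn : 0 ≤ ∫ t, f t ^ 2 ∂ν := integral_nonneg (fun t => sq_nonneg _)
  have hμnn : 0 ≤ (ν Set.univ).toReal := ENNReal.toReal_nonneg
  have h2 : (∫ t, f t ∂ν) ^ 2 ≤ ((∫ t, f t ^ 2 ∂ν) ^ (1/(2:ℝ)) * (ν Set.univ).toReal ^ (1/(2:ℝ)))^2 := by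
    apply sq_le_sq' _ key
    · have h3 : 0 ≤ (∫ t, f t ^ 2 ∂ν) ^ (1/(2:ℝ)) * (ν Set.univ).toReal ^ (1/(2:ℝ)) :=
        mul_nonneg (Real.rpow_nonneg hAnn _) (Real.rpow_nonneg hμnn _)
      nlinarith [integral_nonneg_of_ae (μ := ν) hf0]
  calc (∫ t, f t ∂ν) ^ 2 ≤ _ := h2
    _ = ((∫ t, f t ^ 2 ∂ν) ^ (1/(2:ℝ)))^2 * ((ν Set.univ).toReal ^ (1/(2:ℝ)))^2 := by ring
    _ = (∫ t, f t ^ 2 ∂ν) * (ν Set.univ).toReal := by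
        rw [← Real.rpow_natCast ((∫ t, f t ^ 2 ∂ν) ^ (1/(2:ℝ))) 2,
            ← Real.rpow_natCast (((ν Set.univ).toReal) ^ (1/(2:ℝ))) 2,
            ← Real.rpow_mul hAnn, ← Real.rpow_mul hμnn]
        norm_num
    _ = _ := mul_comm _ _

set_option maxHeartbeats 1000000 in
theorem stmt_0 (p : ENNReal) (hp : 1 < p) (ρ : ℝ → ℝ)
    (hρ : MemLp ρ p (volume.restrict (Ioo (0:ℝ) 1)))
    (hρpos : ∀ᵐ x ∂(volume.restrict (Ioo (0:ℝ) 1)), 0 < ρ x)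
    (ε : ℝ) (hε : 0 < ε) :
    ∃ C : ℝ, 0 < C ∧
      ∀ u u' : ℝ → ℝ,
        MemLp u' 2 (volume.restrict (Ioo (0:ℝ) 1)) →
        (∀ x ∈ Icc (0:ℝ) 1, u x = u 0 + ∫ t in (0:ℝ)..x, u' t) →
        ∀ x ∈ Icc (0:ℝ) 1,
          (u x) ^ 2 ≤ ε * (∫ t in Ioo (0:ℝ) 1, (u' t) ^ 2)
            + C * (∫ t in Ioo (0:ℝ) 1, (u t) ^ 2 * ρ t) := by
  haveI : Fact (volume (Ioo (0:ℝ) 1) < ⊤) := ⟨by simp [Real.volume_Ioo]⟩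
  set μ := volume.restrict (Ioo (0:ℝ) 1) with hμdef
  haveI : IsFiniteMeasure μ := inferInstance
  -- measurable representative of ρ
  set g : ℝ → ℝ := hρ.1.mk ρ with hgdef
  have hgsm : StronglyMeasurable g := hρ.1.stronglyMeasurable_mk
  have hgae : ρ =ᵐ[μ] g := hρ.1.ae_eq_mk
  have hgpos : ∀ᵐ x ∂μ, 0 < g x := by
    filter_upwards [hρpos, hgae] with x h1 h2; rwa [h2] at h1
  have hgint : Integrable g μ :=
    ((hρ.mono_exponent hp.le).integrable le_rfl).congr hgae
  -- the small parameter δ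
  set δ : ℝ := min (ε/2) (1/2) with hδdef
  have hδpos : 0 < δ := lt_min (by linarith) (by norm_num)
  have hδ1 : δ ≤ 1 := le_trans (min_le_right _ _) (by norm_num)
  have hδε : 2*δ ≤ ε := by have := min_le_left (ε/2) (1/2); linarith
  -- the sets where g ≥ 1/(n+1)
  set E : ℕ → Set ℝ := fun n => Ioo (0:ℝ) 1 ∩ {x | ((n:ℝ)+1)⁻¹ ≤ g x} with hEdef
  have hEmeas : ∀ n, MeasurableSet (E n) := fun n =>
    measurableSet_Ioo.inter (hgsm.measurable measurableSet_Ici)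
  set D : ℕ → Set ℝ := fun n => Ioo (0:ℝ) 1 \ E n with hDdef
  have hDanti : Antitone D := by
    intro m n hmn
    apply diff_subset_diff_right
    intro x hx
    refine ⟨hx.1, ?_⟩
    have hc : (m:ℝ) ≤ n := Nat.cast_le.mpr hmn
    have hx2 : ((m:ℝ)+1)⁻¹ ≤ g x := hx.2
    have h4 : ((n:ℝ)+1)⁻¹ ≤ ((m:ℝ)+1)⁻¹ := inv_anti₀ (by positivity) (by linarith)
    exact le_trans h4 hx2
  have hDnull : volume (⋂ n, D n) = 0 := by
    have h1 : (⋂ n, D n) ⊆ {x | x ∈ Ioo (0:ℝ) 1 ∧ ¬ (0 < g x)} := by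
      intro x hx
      simp only [mem_iInter, hDdef, mem_diff] at hx
      refine ⟨(hx 0).1, fun hpos => ?_⟩
      obtain ⟨k, hk⟩ := exists_nat_gt (g x)⁻¹
      refine (hx k).2 ⟨(hx 0).1, ?_⟩
      have h2 : ((k:ℝ)+1)⁻¹ < ((g x)⁻¹)⁻¹ :=
        inv_strictAnti₀ (by positivity) (by linarith)
      rw [inv_inv] at h2
      exact h2.le
    have h3 := ae_iff.mp ((ae_restrict_iff' measurableSet_Ioo).mp hgpos)
    refine measure_mono_null (fun x hx => ?_) h3
    have := h1 hx
    simp only [mem_setOf_eq] at this ⊢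
    tauto
  have hDtend : Tendsto (volume ∘ D) atTop (𝓝 0) := by
    rw [← hDnull]
    refine tendsto_measure_iInter_atTop
      (fun k => ((measurableSet_Ioo.diff (hEmeas k)).nullMeasurableSet)) hDanti ⟨0, ?_⟩
    have h5 : volume (D 0) < ⊤ :=
      lt_of_le_of_lt (measure_mono diff_subset) (by simp [Real.volume_Ioo])
    exact h5.ne
  have hofRpos : (0:ENNReal) < ENNReal.ofReal (δ/2) := by
    rw [ENNReal.ofReal_pos]; linarith
  obtain ⟨n, hn⟩ := (hDtend.eventually (gt_mem_nhds hofRpos)).exists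
  -- the threshold and the good set
  set η : ℝ := ((n:ℝ)+1)⁻¹ with hηdef
  have hηpos : 0 < η := by positivity
  have hSsub : E n ⊆ Ioo (0:ℝ) 1 := inter_subset_left
  have hSg : ∀ y ∈ E n, η ≤ g y := fun y hy => hy.2
  -- the constant
  refine ⟨4/(η*δ), by positivity, ?_⟩
  intro u u' hu' hrep x hx
  -- integrability facts for u'
  have hIccIoo : volume (Icc (0:ℝ) 1 \ Ioo (0:ℝ) 1) = 0 := by
    rw [Icc_diff_Ioo_same zero_le_one]
    exact (Set.toFinite _).measure_zero _
  have hu'int : IntegrableOn u' (Ioo (0:ℝ) 1) volume := hu'.integrable one_le_two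
  have hu'Icc : IntegrableOn u' (Icc (0:ℝ) 1) volume :=
    hu'int.mono_set_ae (ae_le_set.mpr hIccIoo)
  have hu'sq : Integrable (fun t => u' t ^ 2) μ := hu'.integrable_sq
  have hu'sq_Ioo : IntegrableOn (fun t => u' t ^ 2) (Ioo (0:ℝ) 1) volume := hu'sq
  have hA0 : 0 ≤ ∫ t in Ioo (0:ℝ) 1, u' t ^ 2 := integral_nonneg (fun t => sq_nonneg _)
  set A := ∫ t in Ioo (0:ℝ) 1, u' t ^ 2 with hAdef
  -- continuity and boundedness of u on [0,1]
  set F : ℝ → ℝ := fun z => u 0 + ∫ t in (0:ℝ)..z, u' t with hFdef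
  have hFcont : ContinuousOn F (Icc (0:ℝ) 1) := by
    apply ContinuousOn.add continuousOn_const
    have := intervalIntegral.continuousOn_primitive_interval (a := (0:ℝ)) (b := 1)
      (μ := volume) (f := u') (by rwa [uIcc_of_le zero_le_one])
    rwa [uIcc_of_le zero_le_one] at this
  obtain ⟨M, hM⟩ := isCompact_Icc.exists_bound_of_continuousOn hFcont
  have hub : ∀ z ∈ Icc (0:ℝ) 1, |u z| ≤ M := by
    intro z hz
    rw [hrep z hz]
    simpa [Real.norm_eq_abs] using hM z hz
  have humeas : AEStronglyMeasurable u μ := by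
    refine ((hFcont.mono Ioo_subset_Icc_self).aestronglyMeasurable measurableSet_Ioo).congr ?_
    filter_upwards [ae_restrict_mem measurableSet_Ioo] with t ht
    exact (hrep t (Ioo_subset_Icc_self ht)).symm
  have husq_meas : AEStronglyMeasurable (fun t => u t ^ 2) μ :=
    (continuous_pow 2).comp_aestronglyMeasurable humeas
  have husq_int : Integrable (fun t => u t ^ 2) μ := by
    refine Integrable.mono' (integrable_const (M^2)) husq_meas ?_
    filter_upwards [ae_restrict_mem measurableSet_Ioo] with t ht
    have h6 := hub t (Ioo_subset_Icc_self ht)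
    rw [Real.norm_eq_abs, abs_of_nonneg (sq_nonneg _)]
    nlinarith [sq_abs (u t), abs_nonneg (u t)]
  have husqg_int : Integrable (fun t => u t ^ 2 * g t) μ := by
    refine Integrable.mono' ((hgint.abs).const_mul (M^2)) (husq_meas.mul hgsm.aestronglyMeasurable) ?_
    filter_upwards [ae_restrict_mem measurableSet_Ioo] with t ht
    have h6 := hub t (Ioo_subset_Icc_self ht)
    rw [Real.norm_eq_abs, abs_mul, abs_of_nonneg (sq_nonneg _)]
    have h7 : u t ^ 2 ≤ M ^ 2 := by nlinarith [sq_abs (u t), abs_nonneg (u t)]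
    exact mul_le_mul_of_nonneg_right h7 (abs_nonneg _)
  have hRg_eq : ∫ t in Ioo (0:ℝ) 1, u t ^ 2 * ρ t = ∫ t in Ioo (0:ℝ) 1, u t ^ 2 * g t := by
    refine integral_congr_ae ?_
    filter_upwards [hgae] with t ht
    rw [ht]
  have hRg0 : 0 ≤ ∫ t in Ioo (0:ℝ) 1, u t ^ 2 * g t := by
    refine integral_nonneg_of_ae ?_
    filter_upwards [hgpos] with t ht
    exact mul_nonneg (sq_nonneg _) ht.le
  set Rg := ∫ t in Ioo (0:ℝ) 1, u t ^ 2 * g t with hRgdef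
  -- the local averaging set
  set T : Set ℝ := E n ∩ Ioo (x-δ) (x+δ) with hTdef
  have hTsub : T ⊆ Ioo (0:ℝ) 1 := fun z hz => hSsub hz.1
  have hTmeas : MeasurableSet T := (hEmeas n).inter measurableSet_Ioo
  have hTfin : volume T < ⊤ :=
    lt_of_le_of_lt (measure_mono hTsub) (by simp [Real.volume_Ioo])
  set m : ℝ := (volume T).toReal with hmdef
  -- lower bound on the measure of T
  have hmlow : δ/2 ≤ m := by
    set I : Set ℝ := Ioo (max (x-δ) 0) (min (x+δ) 1) with hIdef
    have hIsub : I ⊆ T ∪ D n := by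
      intro z hz
      have hz1 : z ∈ Ioo (0:ℝ) 1 :=
        ⟨lt_of_le_of_lt (le_max_right _ _) hz.1, lt_of_lt_of_le hz.2 (min_le_right _ _)⟩
      have hz2 : z ∈ Ioo (x-δ) (x+δ) :=
        ⟨lt_of_le_of_lt (le_max_left _ _) hz.1, lt_of_lt_of_le hz.2 (min_le_left _ _)⟩
      by_cases hzE : z ∈ E n
      · exact Or.inl ⟨hzE, hz2⟩
      · exact Or.inr ⟨hz1, hzE⟩
    have hvolI : ENNReal.ofReal δ ≤ volume I := by
      rw [hIdef, Real.volume_Ioo]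
      apply ENNReal.ofReal_le_ofReal
      rcases hx with ⟨hx0, hx1⟩
      rcases le_total (x-δ) 0 with h | h
      · rw [max_eq_right h]
        rcases le_total (x+δ) 1 with h' | h'
        · rw [min_eq_left h']; linarith
        · rw [min_eq_right h']; linarith
      · rw [max_eq_left h]
        rcases le_total (x+δ) 1 with h' | h'
        · rw [min_eq_left h']; linarith
        · rw [min_eq_right h']; linarith
    have hchain : ENNReal.ofReal δ ≤ volume T + ENNReal.ofReal (δ/2) :=
      le_trans hvolI (le_trans (le_trans (measure_mono hIsub) (measure_union_le _ _))
        (add_le_add le_rfl hn.le))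
    have hδsplit : ENNReal.ofReal δ = ENNReal.ofReal (δ/2) + ENNReal.ofReal (δ/2) := by
      rw [← ENNReal.ofReal_add (by linarith) (by linarith)]
      norm_num
    rw [hδsplit] at hchain
    have h8 : ENNReal.ofReal (δ/2) ≤ volume T :=
      (ENNReal.add_le_add_iff_right ENNReal.ofReal_ne_top).mp hchain
    calc δ/2 = (ENNReal.ofReal (δ/2)).toReal := by
          rw [ENNReal.toReal_ofReal (by linarith)]
      _ ≤ m := ENNReal.toReal_mono hTfin.ne h8
  have hmpos : 0 < m := lt_of_lt_of_le (by linarith) hmlow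
  -- pointwise bound on T
  have hptw : ∀ y ∈ T, u x ^ 2 ≤ 2*δ*A + 2*(u y)^2 := by
    intro y hy
    have hyIoo : y ∈ Ioo (0:ℝ) 1 := hSsub hy.1
    have hyIcc : y ∈ Icc (0:ℝ) 1 := Ioo_subset_Icc_self hyIoo
    have hxy : |x - y| ≤ δ := by
      rcases hy.2 with ⟨h1, h2⟩
      rw [abs_le]; constructor <;> linarith
    have II : ∀ a ∈ Icc (0:ℝ) 1, ∀ b ∈ Icc (0:ℝ) 1, IntervalIntegrable u' volume a b := by
      intro a ha b hb
      exact (hu'Icc.mono_set (uIcc_subset_Icc ha hb)).intervalIntegrable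
    have hux : u x - u y = ∫ t in y..x, u' t := by
      have h1 := hrep x hx
      have h2 := hrep y hyIcc
      have h3 := intervalIntegral.integral_interval_sub_left
        (II 0 (by norm_num [mem_Icc]) x hx) (II 0 (by norm_num [mem_Icc]) y hyIcc)
      rw [h1, h2]
      rw [← h3]
      ring
    set d := ∫ t in y..x, u' t with hddef
    -- Cauchy–Schwarz estimate for d
    set J : Set ℝ := uIoc y x ∩ Ioo (0:ℝ) 1 with hJdef
    have hJmeas : MeasurableSet J := measurableSet_uIoc.inter measurableSet_Ioo
    have hJIoc : uIoc y x ⊆ Ioc (min y x) (max y x) := by rw [uIoc]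
    have hΙnull : volume (uIoc y x \ Ioo (0:ℝ) 1) = 0 := by
      refine measure_mono_null (fun t ht => ?_) (measure_singleton (1:ℝ))
      have ht1 := hJIoc ht.1
      have hmin : (0:ℝ) ≤ min y x := le_min hyIcc.1 hx.1
      have hmax : max y x ≤ 1 := max_le hyIcc.2 hx.2
      have ht0 : 0 < t := lt_of_le_of_lt hmin ht1.1
      have ht1' : t ≤ 1 := le_trans ht1.2 hmax
      rcases lt_or_eq_of_le ht1' with h | h
      · exact absurd ⟨ht0, h⟩ ht.2
      · exact h
    have hJae : uIoc y x =ᵐ[volume] J := by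
      rw [MeasureTheory.ae_eq_set]
      constructor
      · simpa [hJdef, diff_inter_self_eq_diff, diff_self_inter] using hΙnull
      · simp [hJdef]
        exact measure_mono_null (fun t ht => absurd ht.1.1 (by simp [ht.2])) (measure_empty)
    haveI : IsFiniteMeasure (volume.restrict J) := by
      constructor
      rw [Measure.restrict_apply_univ]
      exact lt_of_le_of_lt (measure_mono inter_subset_right) (by simp [Real.volume_Ioo])
    have hJrestrict : μ.restrict J = volume.restrict J := by
      rw [hμdef, Measure.restrict_restrict hJmeas,
        inter_eq_self_of_subset_left inter_subset_right]
    have hu'memJ : MemLp (fun t => |u' t|) 2 (volume.restrict J) := by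
      rw [← hJrestrict]
      simpa [Real.norm_eq_abs] using (hu'.restrict J).norm
    have hcs := my_cs (ν := volume.restrict J) (f := fun t => |u' t|)
      (Filter.Eventually.of_forall (fun t => abs_nonneg _)) hu'memJ
    have habs : |d| ≤ ∫ t in J, |u' t| := by
      have h9 : ‖∫ t in y..x, u' t‖ ≤ ∫ t in uIoc y x, ‖u' t‖ :=
        intervalIntegral.norm_integral_le_integral_norm_uIoc
      rw [Real.norm_eq_abs] at h9
      simp only [Real.norm_eq_abs] at h9
      rwa [setIntegral_congr_set hJae] at h9
    have hvolJ : ((volume.restrict J) Set.univ).toReal ≤ δ := by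
      rw [Measure.restrict_apply_univ]
      have h10 : volume J ≤ ENNReal.ofReal δ := by
        refine le_trans (measure_mono (fun t ht => hJIoc ht.1)) ?_
        rw [Real.volume_Ioc]
        apply ENNReal.ofReal_le_ofReal
        rw [max_sub_min_eq_abs]
        first
        | exact hxy
        | (rw [abs_sub_comm]; exact hxy)
      calc (volume J).toReal ≤ (ENNReal.ofReal δ).toReal :=
            ENNReal.toReal_mono ENNReal.ofReal_ne_top h10
        _ = δ := ENNReal.toReal_ofReal hδpos.le
    have hJA : ∫ t in J, u' t ^ 2 ≤ A := by
      refine setIntegral_mono_set hu'sq_Ioo (Filter.Eventually.of_forall (fun t => sq_nonneg _))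
        (HasSubset.Subset.eventuallyLE inter_subset_right)
    have habs_sq : ∀ t : ℝ, |u' t| ^ 2 = u' t ^ 2 := fun t => sq_abs _
    have hd2 : d ^ 2 ≤ δ * A := by
      have h11 : 0 ≤ ∫ t in J, |u' t| := integral_nonneg (fun t => abs_nonneg _)
      have h12 : d ^ 2 ≤ (∫ t in J, |u' t|) ^ 2 := by
        rw [← sq_abs d]
        exact pow_le_pow_left₀ (abs_nonneg d) habs 2
      simp only [habs_sq] at hcs
      have h13 : 0 ≤ ∫ t in J, u' t ^ 2 := integral_nonneg (fun t => sq_nonneg _)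
      calc d ^ 2 ≤ (∫ t in J, |u' t|) ^ 2 := h12
        _ ≤ ((volume.restrict J) Set.univ).toReal * ∫ t in J, u' t ^ 2 := hcs
        _ ≤ δ * A := mul_le_mul hvolJ hJA h13 hδpos.le
    have huxy : u x = u y + d := by rw [← hux]; ring
    rw [huxy]
    nlinarith [sq_nonneg (u y - d), hd2]
  -- integrate the pointwise bound over T
  have husq_Ioo : IntegrableOn (fun t => u t ^ 2) (Ioo (0:ℝ) 1) volume := husq_int
  have husq_T : IntegrableOn (fun t => u t ^ 2) T volume := husq_Ioo.mono_set hTsub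
  have husqg_Ioo : IntegrableOn (fun t => u t ^ 2 * g t) (Ioo (0:ℝ) 1) volume := husqg_int
  have husqg_T : IntegrableOn (fun t => u t ^ 2 * g t) T volume := husqg_Ioo.mono_set hTsub
  have hconst_T : ∀ c : ℝ, IntegrableOn (fun _ => c) T volume := fun c =>
    integrableOn_const hTfin.ne
  have i2 : ∫ _ in T, u x ^ 2 ≤ ∫ y in T, (2*δ*A + 2*(u y)^2) := by
    refine setIntegral_mono_on (hconst_T _) ((hconst_T _).add (husq_T.const_mul 2)) hTmeas ?_
    intro y hy
    exact hptw y hy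
  have i1 : ∫ _ in T, u x ^ 2 = m * u x ^ 2 := by
    rw [setIntegral_const, smul_eq_mul]
    rfl
  have i3 : ∫ y in T, (2*δ*A + 2*(u y)^2) = m * (2*δ*A) + 2 * ∫ y in T, (u y)^2 := by
    rw [integral_add (hconst_T _) (husq_T.const_mul 2), setIntegral_const, smul_eq_mul,
      integral_const_mul]
    rfl
  have i4 : ∫ y in T, (u y)^2 ≤ η⁻¹ * ∫ y in T, (u y)^2 * g y := by
    rw [← integral_const_mul]
    refine setIntegral_mono_on husq_T (husqg_T.const_mul η⁻¹) hTmeas ?_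
    intro y hy
    have hgy : η ≤ g y := hSg y hy.1
    have h14 : u y ^ 2 * η ≤ u y ^ 2 * g y := mul_le_mul_of_nonneg_left hgy (sq_nonneg _)
    calc u y ^ 2 = η⁻¹ * (u y ^ 2 * η) := by field_simp
      _ ≤ η⁻¹ * (u y ^ 2 * g y) := mul_le_mul_of_nonneg_left h14 (inv_nonneg.mpr hηpos.le)
  have i5 : ∫ y in T, (u y)^2 * g y ≤ Rg := by
    refine setIntegral_mono_set husqg_Ioo ?_ (HasSubset.Subset.eventuallyLE hTsub)
    rw [← hμdef]
    filter_upwards [hgpos] with t ht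
    exact mul_nonneg (sq_nonneg _) ht.le
  -- put everything together
  have hmain : m * (u x ^ 2) ≤ m * (2*δ*A) + 2 * (η⁻¹ * Rg) := by
    have := le_trans (le_trans (le_of_eq i1.symm) i2) (le_of_eq i3)
    have h17 : (2:ℝ) * ∫ y in T, (u y)^2 ≤ 2 * (η⁻¹ * ∫ y in T, (u y)^2 * g y) := by
      linarith [i4]
    have h18 : η⁻¹ * ∫ y in T, (u y)^2 * g y ≤ η⁻¹ * Rg :=
      mul_le_mul_of_nonneg_left i5 (inv_nonneg.mpr hηpos.le)
    linarith
  rw [hRg_eq]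
  have hC2 : (δ/2) * (4/(η*δ)) = 2 * η⁻¹ := by field_simp; ring
  have hfinal : m * (u x ^ 2) ≤ m * (ε * A + (4/(η*δ)) * Rg) := by
    have hCpos : (0:ℝ) ≤ 4/(η*δ) := by positivity
    have h19 : m * (2*δ*A) ≤ m * (ε*A) := by
      apply mul_le_mul_of_nonneg_left _ hmpos.le
      apply mul_le_mul_of_nonneg_right _ hA0
      linarith
    have h20 : 2 * (η⁻¹ * Rg) ≤ m * ((4/(η*δ)) * Rg) := by
      have h21 : (δ/2) * ((4/(η*δ)) * Rg) ≤ m * ((4/(η*δ)) * Rg) :=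
        mul_le_mul_of_nonneg_right hmlow (mul_nonneg hCpos hRg0)
      calc 2 * (η⁻¹ * Rg) = ((δ/2) * (4/(η*δ))) * Rg := by rw [hC2]; ring
        _ = (δ/2) * ((4/(η*δ)) * Rg) := by ring
        _ ≤ m * ((4/(η*δ)) * Rg) := h21
    calc m * (u x ^ 2) ≤ m * (2*δ*A) + 2 * (η⁻¹ * Rg) := hmain
      _ ≤ m * (ε*A) + m * ((4/(η*δ)) * Rg) := add_le_add h19 h20
      _ = m * (ε * A + (4/(η*δ)) * Rg) := by ring
  exact le_of_mul_le_mul_left hfinal hmpos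
end

section
/- Let p ∈ (1,∞] and let ρ ∈ L^p(0,1) satisfy ρ(x) > 0 for a.e. x ∈ (0,1). Then there exist constants C₁, C₂ > 0 such that for all u ∈ H¹(0,1): C₁ ‖u‖²_{H¹(0,1)} ≤ ‖u'‖²_{L²(0,1)} + ∫₀¹ u(x)² ρ(x) dx ≤ C₂ ‖u‖²_{H¹(0,1)}. -/
open MeasureTheory Set Filter Topology

lemma aux_icc_int {u' : ℝ → ℝ} (h : IntegrableOn u' (Ioo (0:ℝ) 1) volume) :
    IntegrableOn u' (Icc (0:ℝ) 1) volume := by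
  rwa [IntegrableOn, Measure.restrict_congr_set Ioo_ae_eq_Icc] at h

lemma aux_ii {u' : ℝ → ℝ} (h : IntegrableOn u' (Ioo (0:ℝ) 1) volume) {x : ℝ}
    (hx : x ∈ Icc (0:ℝ) 1) : IntervalIntegrable u' volume 0 x := by
  have h2 : IntegrableOn u' (uIcc 0 x) volume := by
    apply (aux_icc_int h).mono_set
    rw [uIcc_of_le hx.1]
    exact Icc_subset_Icc le_rfl hx.2
  exact h2.intervalIntegrable

lemma aux_pointwise {u u' : ℝ → ℝ} (hu' : IntegrableOn u' (Ioo (0:ℝ) 1) volume)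
    (hu : ∀ x ∈ Icc (0:ℝ) 1, u x = u 0 + ∫ t in (0:ℝ)..x, u' t)
    {x y : ℝ} (hx : x ∈ Ioo (0:ℝ) 1) (hy : y ∈ Ioo (0:ℝ) 1) :
    |u x - u y| ≤ ∫ t in Ioo (0:ℝ) 1, |u' t| := by
  have hx' := Ioo_subset_Icc_self hx
  have hy' := Ioo_subset_Icc_self hy
  have heq : u x - u y = ∫ t in y..x, u' t := by
    rw [hu x hx', hu y hy',
      ← intervalIntegral.integral_interval_sub_left (aux_ii hu' hx') (aux_ii hu' hy')]
    ring
  rw [heq]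
  have h1 : |∫ t in y..x, u' t| ≤ ∫ t in uIoc y x, |u' t| := by
    simpa [Real.norm_eq_abs] using
      (intervalIntegral.norm_integral_le_integral_norm_uIoc (f := u') (a := y) (b := x)
        (μ := volume))
  refine h1.trans ?_
  apply setIntegral_mono_set hu'.abs (ae_of_all _ fun t => abs_nonneg _)
  apply HasSubset.Subset.eventuallyLE
  intro t ht
  rcases le_total y x with h | h
  · rw [uIoc_of_le h] at ht
    exact ⟨hy.1.trans ht.1, lt_of_le_of_lt ht.2 hx.2⟩
  · rw [uIoc_of_ge h] at ht
    exact ⟨hx.1.trans ht.1, lt_of_le_of_lt ht.2 hy.2⟩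

lemma aux_vol_Ioo : (volume (Ioo (0:ℝ) 1)).toReal = 1 := by
  simp [Real.volume_Ioo]

lemma aux_avg {u u' : ℝ → ℝ} (hu' : IntegrableOn u' (Ioo (0:ℝ) 1) volume)
    (hu2 : IntegrableOn (fun t => (u t) ^ 2) (Ioo (0:ℝ) 1) volume)
    (hu : ∀ x ∈ Icc (0:ℝ) 1, u x = u 0 + ∫ t in (0:ℝ)..x, u' t)
    {S : Set ℝ} (hS : MeasurableSet S) (hSsub : S ⊆ Ioo (0:ℝ) 1) :
    (∫ t in Ioo (0:ℝ) 1, (u t) ^ 2) * (volume S).toReal ≤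
      2 * (∫ y in S, (u y) ^ 2) +
        2 * (∫ t in Ioo (0:ℝ) 1, |u' t|) ^ 2 * (volume S).toReal := by
  set J := ∫ t in Ioo (0:ℝ) 1, |u' t| with hJ
  set mS := (volume S).toReal with hmS
  have hSfin : volume S < ⊤ :=
    lt_of_le_of_lt (measure_mono hSsub) (by simp [Real.volume_Ioo])
  have hptwise : ∀ x ∈ Ioo (0:ℝ) 1, ∀ y ∈ S, (u x) ^ 2 ≤ 2 * (u y) ^ 2 + 2 * J ^ 2 := by
    intro x hx y hy
    have h := aux_pointwise hu' hu hx (hSsub hy)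
    nlinarith [sq_nonneg (u y - (u x - u y)), abs_nonneg (u x - u y),
      sq_abs (u x - u y), sq_nonneg (|u x - u y| + J)]
  have hu2S : IntegrableOn (fun y => (u y) ^ 2) S volume := hu2.mono_set hSsub
  have hconst : ∀ c : ℝ, IntegrableOn (fun _ : ℝ => c) S volume :=
    fun c => integrableOn_const hSfin.ne
  have hinner : ∀ x ∈ Ioo (0:ℝ) 1,
      (u x) ^ 2 * mS ≤ 2 * (∫ y in S, (u y) ^ 2) + 2 * J ^ 2 * mS := by
    intro x hx
    have h1 : ∫ y in S, (u x) ^ 2 ∂volume = (u x) ^ 2 * mS := by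
      rw [setIntegral_const]; rw [smul_eq_mul]; rw [measureReal_def, ← hmS]; ring
    have h2 : (∫ y in S, (u x) ^ 2 ∂volume) ≤ ∫ y in S, (2 * (u y) ^ 2 + 2 * J ^ 2) ∂volume := by
      refine setIntegral_mono_on (hconst _) ?_ hS (fun y hy => hptwise x hx y hy)
      exact ((hu2S.const_mul 2).add (hconst _))
    have h3 : (∫ y in S, (2 * (u y) ^ 2 + 2 * J ^ 2) ∂volume)
        = 2 * (∫ y in S, (u y) ^ 2) + 2 * J ^ 2 * mS := by
      rw [integral_add (hu2S.const_mul 2) (hconst _), integral_const_mul, setIntegral_const,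
        smul_eq_mul, measureReal_def, ← hmS]
      ring
    rw [← h1]
    rw [h3] at h2
    exact h2
  have houter : (∫ x in Ioo (0:ℝ) 1, (u x) ^ 2 * mS) ≤
      ∫ x in Ioo (0:ℝ) 1, (2 * (∫ y in S, (u y) ^ 2) + 2 * J ^ 2 * mS) := by
    refine setIntegral_mono_on (hu2.mul_const _) ?_ measurableSet_Ioo hinner
    exact integrableOn_const (by simp [Real.volume_Ioo])
  rw [integral_mul_const] at houter
  rw [setIntegral_const, smul_eq_mul, measureReal_def, aux_vol_Ioo, one_mul] at houter
  exact houter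

lemma aux_CS {u' : ℝ → ℝ} (hMem : MemLp u' 2 (volume.restrict (Ioo (0:ℝ) 1))) :
    (∫ t in Ioo (0:ℝ) 1, |u' t|) ^ 2 ≤ ∫ t in Ioo (0:ℝ) 1, (u' t) ^ 2 := by
  set μ := volume.restrict (Ioo (0:ℝ) 1) with hμdef
  have h2 : (ENNReal.ofReal (2:ℝ)) = 2 := by norm_num
  have habs : MemLp (fun t => |u' t|) (ENNReal.ofReal (2:ℝ)) μ := by
    rw [h2]
    simpa [Real.norm_eq_abs] using hMem.norm
  have hone : MemLp (fun _ : ℝ => (1:ℝ)) (ENNReal.ofReal (2:ℝ)) μ := memLp_const _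
  have hconj : Real.HolderConjugate 2 2 := by constructor <;> norm_num
  have := integral_mul_le_Lp_mul_Lq_of_nonneg hconj
    (f := fun t => |u' t|) (g := fun _ => (1:ℝ)) (μ := μ)
    (ae_of_all _ fun t => abs_nonneg _) (ae_of_all _ fun _ => zero_le_one) habs hone
  simp only [mul_one, Real.one_rpow] at this
  have hμuniv : ∫ (_ : ℝ), (1:ℝ) ∂μ = 1 := by
    simp [hμdef, Real.volume_Ioo]
  rw [hμuniv] at this
  have hsq : ∀ t, |u' t| ^ (2:ℝ) = (u' t) ^ 2 := by
    intro t
    rw [show ((2:ℝ)) = ((2:ℕ):ℝ) by norm_num, Real.rpow_natCast, sq_abs]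
  simp only [hsq] at this
  have hJnn : 0 ≤ ∫ t, |u' t| ∂μ := integral_nonneg fun t => abs_nonneg _
  have hInn : 0 ≤ ∫ t, (u' t) ^ 2 ∂μ := integral_nonneg fun t => sq_nonneg _
  have h1 : (∫ t, |u' t| ∂μ) ≤ (∫ t, (u' t) ^ 2 ∂μ) ^ ((1:ℝ)/2) := by
    simpa using this
  calc (∫ t, |u' t| ∂μ) ^ 2 ≤ ((∫ t, (u' t) ^ 2 ∂μ) ^ ((1:ℝ)/2)) ^ 2 := by
        apply pow_le_pow_left₀ hJnn h1
    _ = ∫ t, (u' t) ^ 2 ∂μ := by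
        rw [← Real.rpow_natCast ((∫ t, (u' t) ^ 2 ∂μ) ^ ((1:ℝ)/2)) 2, ← Real.rpow_mul hInn]
        norm_num

lemma aux_select {ρ : ℝ → ℝ} (hmeas : AEStronglyMeasurable ρ (volume.restrict (Ioo (0:ℝ) 1)))
    (hρpos : ∀ᵐ x ∂(volume.restrict (Ioo (0:ℝ) 1)), 0 < ρ x) :
    ∃ δ : ℝ, 0 < δ ∧ δ ≤ 1 ∧ ∃ S : Set ℝ, MeasurableSet S ∧ S ⊆ Ioo (0:ℝ) 1 ∧
      (∀ᵐ x ∂(volume.restrict S), δ ≤ ρ x) ∧ 1/2 ≤ (volume S).toReal := by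
  set μ := volume.restrict (Ioo (0:ℝ) 1) with hμdef
  obtain ⟨g, hgmeas, hgae⟩ := hmeas.aemeasurable
  set A : ℕ → Set ℝ := fun n => Ioo (0:ℝ) 1 ∩ {x | 1/(n+1 : ℝ) ≤ g x} with hA
  have hAmeas : ∀ n, MeasurableSet (A n) :=
    fun n => measurableSet_Ioo.inter (measurableSet_le measurable_const hgmeas)
  have hAsub : ∀ n, A n ⊆ Ioo (0:ℝ) 1 := fun n => inter_subset_left
  have hmono : Monotone A := by
    apply monotone_nat_of_le_succ
    intro n x hx
    simp only [hA, mem_inter_iff, mem_setOf_eq] at hx ⊢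
    refine ⟨hx.1, le_trans ?_ hx.2⟩
    apply div_le_div_of_nonneg_left (by norm_num) (by positivity) (by push_cast; linarith)
  have hae : ∀ᵐ x ∂μ, x ∈ ⋃ n, A n := by
    filter_upwards [hρpos, hgae, ae_restrict_mem measurableSet_Ioo] with x h1 h2 h3
    have hgx : 0 < g x := by rw [← h2]; exact h1
    obtain ⟨n, hn⟩ := exists_nat_one_div_lt hgx
    exact mem_iUnion.2 ⟨n, h3, hn.le⟩
  have hUeq : μ (⋃ n, A n) = ENNReal.ofReal 1 := by
    have h1 : μ (⋃ n, A n) = μ univ := measure_congr (Filter.eventuallyEq_univ.2 hae)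
    rw [h1, hμdef, Measure.restrict_apply_univ]
    simp [Real.volume_Ioo]
  have hμA : ∀ (s : Set ℝ), s ⊆ Ioo (0:ℝ) 1 → MeasurableSet s → μ s = volume s := by
    intro s hsub hms
    rw [hμdef, Measure.restrict_apply hms, inter_eq_self_of_subset_left hsub]
  have hvolU : volume (⋃ n, A n) = ENNReal.ofReal 1 := by
    rw [← hμA _ (iUnion_subset hAsub) (MeasurableSet.iUnion hAmeas), hUeq]
  have hten : Tendsto (volume ∘ A) atTop (𝓝 (ENNReal.ofReal 1)) := by
    rw [← hvolU]; exact tendsto_measure_iUnion_atTop hmono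
  have hev : ∀ᶠ n in atTop, ENNReal.ofReal (1/2) < volume (A n) := by
    apply hten.eventually (lt_mem_nhds ?_)
    rw [ENNReal.ofReal_lt_ofReal_iff] <;> norm_num
  obtain ⟨n, hn⟩ := hev.exists
  have hAfin : volume (A n) ≠ ⊤ := by
    apply ne_top_of_le_ne_top _ (measure_mono (hAsub n))
    simp [Real.volume_Ioo]
  refine ⟨1/(n+1 : ℝ), by positivity, ?_, A n, hAmeas n, hAsub n, ?_, ?_⟩
  · rw [div_le_one (by positivity)]; push_cast; linarith [Nat.cast_nonneg (α := ℝ) n]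
  · have hle : volume.restrict (A n) ≤ μ := by
      rw [hμdef]; exact Measure.restrict_mono (hAsub n) le_rfl
    have hgae' : ∀ᵐ x ∂(volume.restrict (A n)), ρ x = g x := ae_mono hle hgae
    filter_upwards [hgae', ae_restrict_mem (hAmeas n)] with x h1 h2
    rw [h1]; exact h2.2
  · have := (ENNReal.ofReal_lt_iff_lt_toReal (by norm_num) hAfin).1 hn
    linarith

lemma aux_sup {u u' : ℝ → ℝ} (hu' : IntegrableOn u' (Ioo (0:ℝ) 1) volume)
    (hu2 : IntegrableOn (fun t => (u t) ^ 2) (Ioo (0:ℝ) 1) volume)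
    (hu : ∀ x ∈ Icc (0:ℝ) 1, u x = u 0 + ∫ t in (0:ℝ)..x, u' t)
    {x : ℝ} (hx : x ∈ Ioo (0:ℝ) 1) :
    (u x) ^ 2 ≤ 2 * (∫ t in Ioo (0:ℝ) 1, (u t) ^ 2) +
      2 * (∫ t in Ioo (0:ℝ) 1, |u' t|) ^ 2 := by
  set J := ∫ t in Ioo (0:ℝ) 1, |u' t| with hJ
  have hptwise : ∀ y ∈ Ioo (0:ℝ) 1, (u x) ^ 2 ≤ 2 * (u y) ^ 2 + 2 * J ^ 2 := by
    intro y hy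
    have h := aux_pointwise hu' hu hx hy
    nlinarith [sq_nonneg (u y - (u x - u y)), abs_nonneg (u x - u y),
      sq_abs (u x - u y), sq_nonneg (|u x - u y| + J)]
  have hconst : ∀ c : ℝ, IntegrableOn (fun _ : ℝ => c) (Ioo (0:ℝ) 1) volume :=
    fun c => integrableOn_const (by simp [Real.volume_Ioo])
  have h2 : (∫ _ in Ioo (0:ℝ) 1, (u x) ^ 2 ∂volume) ≤
      ∫ y in Ioo (0:ℝ) 1, (2 * (u y) ^ 2 + 2 * J ^ 2) ∂volume :=
    setIntegral_mono_on (hconst _) ((hu2.const_mul 2).add (hconst _)) measurableSet_Ioo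
      (fun y hy => hptwise y hy)
  rw [setIntegral_const, smul_eq_mul, measureReal_def, aux_vol_Ioo, one_mul] at h2
  rw [integral_add (hu2.const_mul 2) (hconst _), integral_const_mul, setIntegral_const,
    smul_eq_mul, measureReal_def, aux_vol_Ioo, one_mul] at h2
  exact h2

/- STATEMENT 1: Let p ∈ (1,∞] and ρ ∈ L^p(0,1) with ρ > 0 a.e. Then there are C₁, C₂ > 0 with
  C₁ ‖u‖²_{H¹} ≤ ‖u'‖²_{L²} + ∫₀¹ u² ρ ≤ C₂ ‖u‖²_{H¹}  for all u ∈ H¹(0,1),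
where ‖u‖²_{H¹} = ∫₀¹ u² + ∫₀¹ u'². H¹(0,1) is encoded as: u absolutely continuous on [0,1]
with a.e. derivative u' ∈ L²(0,1). -/
theorem stmt_1 (p : ENNReal) (hp : 1 < p) (ρ : ℝ → ℝ)
    (hρ : MemLp ρ p (volume.restrict (Ioo (0:ℝ) 1)))
    (hρpos : ∀ᵐ x ∂(volume.restrict (Ioo (0:ℝ) 1)), 0 < ρ x) :
    ∃ C₁ C₂ : ℝ, 0 < C₁ ∧ 0 < C₂ ∧
      ∀ u u' : ℝ → ℝ,
        MemLp u' 2 (volume.restrict (Ioo (0:ℝ) 1)) →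
        (∀ x ∈ Icc (0:ℝ) 1, u x = u 0 + ∫ t in (0:ℝ)..x, u' t) →
        C₁ * ((∫ t in Ioo (0:ℝ) 1, (u t) ^ 2) + ∫ t in Ioo (0:ℝ) 1, (u' t) ^ 2)
            ≤ (∫ t in Ioo (0:ℝ) 1, (u' t) ^ 2) + (∫ t in Ioo (0:ℝ) 1, (u t) ^ 2 * ρ t)
          ∧ (∫ t in Ioo (0:ℝ) 1, (u' t) ^ 2) + (∫ t in Ioo (0:ℝ) 1, (u t) ^ 2 * ρ t)
            ≤ C₂ * ((∫ t in Ioo (0:ℝ) 1, (u t) ^ 2) + ∫ t in Ioo (0:ℝ) 1, (u' t) ^ 2) := by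
  haveI hfin : IsFiniteMeasure (volume.restrict (Ioo (0:ℝ) 1)) :=
    ⟨by rw [Measure.restrict_apply_univ]; simp [Real.volume_Ioo]⟩
  obtain ⟨δ, hδ0, hδ1, S, hSmeas, hSsub, hρS, hmS⟩ := aux_select hρ.1 hρpos
  have hρint : Integrable ρ (volume.restrict (Ioo (0:ℝ) 1)) := hρ.integrable hp.le
  set R := ∫ t in Ioo (0:ℝ) 1, ρ t with hR
  have hR0 : 0 ≤ R := integral_nonneg_of_ae (hρpos.mono fun x h => h.le)
  set ε := δ/2 with hε
  have hε0 : 0 < ε := by positivity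
  have hε1 : ε ≤ 1/2 := by rw [hε]; linarith
  refine ⟨ε/4, 1 + 2*R, by positivity, by linarith, ?_⟩
  intro u u' hMem hu
  -- basic integrability
  have hu'int : IntegrableOn u' (Ioo (0:ℝ) 1) volume := hMem.integrable (by norm_num)
  have hu'2int : IntegrableOn (fun t => (u' t) ^ 2) (Ioo (0:ℝ) 1) volume := hMem.integrable_sq
  have hucont : ContinuousOn u (Icc (0:ℝ) 1) := by
    have hprim : ContinuousOn (fun x => ∫ t in (0:ℝ)..x, u' t) (Icc (0:ℝ) 1) := by
      have h1 : IntegrableOn u' (uIcc (0:ℝ) 1) volume := by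
        rw [uIcc_of_le zero_le_one]; exact aux_icc_int hu'int
      simpa [uIcc_of_le (zero_le_one (α := ℝ))] using intervalIntegral.continuousOn_primitive_interval h1
    exact (continuousOn_const.add hprim).congr hu
  have hu2int : IntegrableOn (fun t => (u t) ^ 2) (Ioo (0:ℝ) 1) volume :=
    ((hucont.pow 2).integrableOn_Icc).mono_set Ioo_subset_Icc_self
  set a := ∫ t in Ioo (0:ℝ) 1, (u' t) ^ 2 with ha
  set b := ∫ t in Ioo (0:ℝ) 1, (u t) ^ 2 with hb
  set c := ∫ t in Ioo (0:ℝ) 1, (u t) ^ 2 * ρ t with hc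
  set J := ∫ t in Ioo (0:ℝ) 1, |u' t| with hJ
  have ha0 : 0 ≤ a := setIntegral_nonneg measurableSet_Ioo fun t _ => sq_nonneg _
  have hb0 : 0 ≤ b := setIntegral_nonneg measurableSet_Ioo fun t _ => sq_nonneg _
  have hJsq : J ^ 2 ≤ a := aux_CS hMem
  -- integrability of u^2 * ρ
  obtain ⟨M, hM⟩ := isCompact_Icc.exists_bound_of_continuousOn hucont
  have hu2ρint : IntegrableOn (fun t => (u t) ^ 2 * ρ t) (Ioo (0:ℝ) 1) volume := by
    refine Integrable.bdd_mul (c := M ^ 2) hρint (hu2int.aestronglyMeasurable) ?_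
    filter_upwards [ae_restrict_mem measurableSet_Ioo] with x hx
    have := hM x (Ioo_subset_Icc_self hx)
    rw [Real.norm_eq_abs] at this ⊢
    rw [abs_pow]
    nlinarith [abs_nonneg (u x)]
  constructor
  · -- lower bound
    set cS := ∫ y in S, (u y) ^ 2 with hcS
    have hcS0 : 0 ≤ cS := setIntegral_nonneg hSmeas fun t _ => sq_nonneg _
    set mS := (volume S).toReal with hmSdef
    have hmS1 : mS ≤ 1 := by
      have h1 : volume S ≤ volume (Ioo (0:ℝ) 1) := measure_mono hSsub
      have := ENNReal.toReal_mono (by simp [Real.volume_Ioo]) h1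
      rwa [aux_vol_Ioo] at this
    have havg : b * mS ≤ 2 * cS + 2 * J ^ 2 * mS := aux_avg hu'int hu2int hu hSmeas hSsub
    have hkey : b ≤ 4 * cS + 4 * a := by nlinarith
    have hcε : ε * cS ≤ c := by
      have h1 : (∫ y in S, ε * (u y) ^ 2) ≤ ∫ y in S, (u y) ^ 2 * ρ y := by
        refine setIntegral_mono_ae_restrict ((hu2int.mono_set hSsub).const_mul ε)
          (hu2ρint.mono_set hSsub) ?_
        filter_upwards [hρS] with x hx
        nlinarith [sq_nonneg (u x)]
      have h2 : (∫ y in S, (u y) ^ 2 * ρ y) ≤ c := by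
        refine setIntegral_mono_set hu2ρint ?_ (HasSubset.Subset.eventuallyLE hSsub)
        filter_upwards [hρpos] with x hx
        positivity
      rw [integral_const_mul] at h1
      linarith
    nlinarith
  · -- upper bound
    have hsup : ∀ x ∈ Ioo (0:ℝ) 1, (u x) ^ 2 ≤ 2 * b + 2 * J ^ 2 :=
      fun x hx => aux_sup hu'int hu2int hu hx
    have h1 : c ≤ ∫ t in Ioo (0:ℝ) 1, (2 * b + 2 * J ^ 2) * ρ t := by
      refine setIntegral_mono_ae_restrict hu2ρint (hρint.const_mul _) ?_
      filter_upwards [hρpos, ae_restrict_mem measurableSet_Ioo] with x hx1 hx2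
      exact mul_le_mul_of_nonneg_right (hsup x hx2) hx1.le
    rw [integral_const_mul] at h1
    nlinarith
end

section
/- Let γ ∈ L¹(0,1) with γ(x) ≥ 0 for a.e. x ∈ (0,1). Let w ∈ W^{2,1}(0,1) satisfy w''(x) = γ(x) w(x) for a.e. x ∈ (0,1) and w(0) = w(1) = 1. Then 0 < w(x) ≤ 1 for all x ∈ [0,1]. -/
open MeasureTheory Set Filter Topology

lemma keyA (γ v v' : ℝ → ℝ)
    (hγI : IntervalIntegrable γ volume 0 1)
    (hγpos : ∀ᵐ t ∂(volume : Measure ℝ), t ∈ Icc (0:ℝ) 1 → 0 ≤ γ t)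
    (hγvI : ∀ x ∈ Icc (0:ℝ) 1, ∀ y ∈ Icc (0:ℝ) 1,
      IntervalIntegrable (fun t => γ t * v t) volume x y)
    (hv'c : Continuous v')
    (hvd : ∀ x, HasDerivAt v (v' x) x)
    (hode : ∀ x ∈ Icc (0:ℝ) 1, ∀ y ∈ Icc (0:ℝ) 1, v' y - v' x = ∫ t in x..y, γ t * v t)
    (hv0 : v 0 = 1) (hv1 : v 1 = 1) :
    ∀ x ∈ Icc (0:ℝ) 1, 0 < v x ∧ v x ≤ 1 := by
  have hvc : Continuous v := by
    rw [continuous_iff_continuousAt]; exact fun x => (hvd x).continuousAt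
  have hftc : ∀ x y : ℝ, v y - v x = ∫ t in x..y, v' t := by
    intro x y
    rw [intervalIntegral.integral_eq_sub_of_hasDerivAt (fun t _ => hvd t)
      (hv'c.intervalIntegrable x y)]
  have hγsub : ∀ x y : ℝ, 0 ≤ x → y ≤ 1 → x ≤ y → IntervalIntegrable γ volume x y := by
    intro x y h0 h1 hxy
    refine hγI.mono_set ?_
    rw [uIcc_of_le hxy, uIcc_of_le zero_le_one]
    exact Icc_subset_Icc h0 h1
  -- sign lemmas for ∫ γ v
  have key_le : ∀ x y M : ℝ, x ∈ Icc (0:ℝ) 1 → y ∈ Icc (0:ℝ) 1 → x ≤ y →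
      (∀ t ∈ Icc x y, v t ≤ M) →
      (∫ t in x..y, γ t * v t) ≤ (∫ t in x..y, γ t) * M := by
    intro x y M hx hy hxy hb
    rw [← intervalIntegral.integral_mul_const]
    refine intervalIntegral.integral_mono_ae_restrict hxy (hγvI x hx y hy)
      ((hγsub x y hx.1 hy.2 hxy).mul_const M) ?_
    filter_upwards [ae_restrict_mem measurableSet_Icc, ae_restrict_of_ae hγpos] with t ht hγt
    have h01 : t ∈ Icc (0:ℝ) 1 := ⟨le_trans hx.1 ht.1, le_trans ht.2 hy.2⟩
    exact mul_le_mul_of_nonneg_left (hb t ht) (hγt h01)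
  have key_ge : ∀ x y m : ℝ, x ∈ Icc (0:ℝ) 1 → y ∈ Icc (0:ℝ) 1 → x ≤ y →
      (∀ t ∈ Icc x y, m ≤ v t) →
      (∫ t in x..y, γ t) * m ≤ ∫ t in x..y, γ t * v t := by
    intro x y m hx hy hxy hb
    rw [← intervalIntegral.integral_mul_const]
    refine intervalIntegral.integral_mono_ae_restrict hxy
      ((hγsub x y hx.1 hy.2 hxy).mul_const m) (hγvI x hx y hy) ?_
    filter_upwards [ae_restrict_mem measurableSet_Icc, ae_restrict_of_ae hγpos] with t ht hγt
    have h01 : t ∈ Icc (0:ℝ) 1 := ⟨le_trans hx.1 ht.1, le_trans ht.2 hy.2⟩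
    exact mul_le_mul_of_nonneg_left (hb t ht) (hγt h01)
  have hγmono : ∀ x y : ℝ, x ∈ Icc (0:ℝ) 1 → y ∈ Icc (0:ℝ) 1 → x ≤ y →
      0 ≤ ∫ t in x..y, γ t := by
    intro x y hx hy hxy
    refine intervalIntegral.integral_nonneg_of_ae_restrict hxy ?_
    filter_upwards [ae_restrict_mem measurableSet_Icc, ae_restrict_of_ae hγpos] with t ht hγt
    exact hγt ⟨le_trans hx.1 ht.1, le_trans ht.2 hy.2⟩
  -- positivity
  have hpos : ∀ x ∈ Icc (0:ℝ) 1, 0 < v x := by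
    by_contra hcon
    push_neg at hcon
    obtain ⟨x0, hx0, hx0le⟩ := hcon
    obtain ⟨c, hc, hcmin⟩ := (isCompact_Icc (a := (0:ℝ)) (b := 1)).exists_isMinOn
      ⟨0, left_mem_Icc.2 zero_le_one⟩ hvc.continuousOn
    have hvcle : v c ≤ 0 := le_trans (hcmin hx0) hx0le
    have hc0 : c ≠ 0 := by rintro rfl; rw [hv0] at hvcle; linarith
    have hc1 : c ≠ 1 := by rintro rfl; rw [hv1] at hvcle; linarith
    have hcI : c ∈ Ioo (0:ℝ) 1 := ⟨lt_of_le_of_ne hc.1 (Ne.symm hc0), lt_of_le_of_ne hc.2 hc1⟩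
    have hv'c0 : v' c = 0 :=
      (hcmin.isLocalMin (Icc_mem_nhds hcI.1 hcI.2)).hasDerivAt_eq_zero (hvd c)
    rcases lt_or_eq_of_le hvcle with hneg | hzero
    · -- v c < 0 : take first zero to the right
      have hIVT : ∃ q ∈ Icc c 1, v q = 0 := by
        have h0mem : (0:ℝ) ∈ Icc (v c) (v 1) := by
          rw [hv1]; exact ⟨le_of_lt hneg, zero_le_one⟩
        obtain ⟨q, hq, hvq⟩ := intermediate_value_Icc hc.2 hvc.continuousOn h0mem
        exact ⟨q, hq, hvq⟩
      set Sq : Set ℝ := Icc c 1 ∩ v ⁻¹' {0} with hSq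
      have hSne : Sq.Nonempty := by
        obtain ⟨q, hq, hvq⟩ := hIVT; exact ⟨q, hq, hvq⟩
      have hSbdd : BddBelow Sq := ⟨c, fun z hz => hz.1.1⟩
      have hSclosed : IsClosed Sq :=
        (isClosed_Icc.inter (isClosed_singleton.preimage hvc))
      set q0 : ℝ := sInf Sq with hq0def
      have hq0 : q0 ∈ Sq := hSclosed.csInf_mem hSne hSbdd
      have hcq0 : c ≤ q0 := hq0.1.1
      have hq01 : q0 ≤ 1 := hq0.1.2
      have hvq0 : v q0 = 0 := hq0.2
      have hclt : c < q0 := by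
        rcases lt_or_eq_of_le hcq0 with h | h
        · exact h
        · exfalso; rw [← h] at hvq0; linarith
      have hnegIco : ∀ t ∈ Ico c q0, v t ≤ 0 := by
        intro t ht
        by_contra hvt
        push_neg at hvt
        have h0mem : (0:ℝ) ∈ Icc (v c) (v t) := ⟨le_of_lt hneg, le_of_lt hvt⟩
        obtain ⟨z, hz, hvz⟩ := intermediate_value_Icc ht.1 hvc.continuousOn h0mem
        have hzS : z ∈ Sq := ⟨⟨hz.1, le_trans hz.2 (le_trans (le_of_lt ht.2) hq01)⟩, hvz⟩
        have h1 : q0 ≤ z := csInf_le hSbdd hzS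
        have h2 : z < q0 := lt_of_le_of_lt hz.2 ht.2
        linarith
      have hnegIcc : ∀ t ∈ Icc c q0, v t ≤ 0 := by
        intro t ht
        rcases lt_or_eq_of_le ht.2 with h | h
        · exact hnegIco t ⟨ht.1, h⟩
        · rw [h, hvq0]
      have hcmem : c ∈ Icc (0:ℝ) 1 := hc
      have hv'np : ∀ y ∈ Icc c q0, v' y ≤ 0 := by
        intro y hy
        have hy01 : y ∈ Icc (0:ℝ) 1 := ⟨le_trans hc.1 hy.1, le_trans hy.2 hq01⟩
        have heq := hode c hcmem y hy01
        have hle := key_le c y 0 hcmem hy01 hy.1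
          (fun t ht => hnegIcc t ⟨ht.1, le_trans ht.2 hy.2⟩)
        rw [mul_zero] at hle
        linarith
      have hint : (∫ t in c..q0, v' t) ≤ 0 := by
        calc (∫ t in c..q0, v' t) ≤ ∫ t in c..q0, (0:ℝ) :=
              intervalIntegral.integral_mono_on hcq0 (hv'c.intervalIntegrable _ _)
                intervalIntegrable_const hv'np
          _ = 0 := intervalIntegral.integral_zero
      have hd := hftc c q0
      rw [hvq0] at hd
      linarith
    · -- v c = 0 : zero propagation
      have hnn : ∀ t ∈ Icc (0:ℝ) 1, 0 ≤ v t := by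
        intro t ht; rw [← hzero]; exact hcmin ht
      set Z : Set ℝ := {x | x ∈ Icc c 1 ∧ ∀ y ∈ Icc c x, v y = 0} with hZ
      have hcZ : c ∈ Z := by
        refine ⟨⟨le_refl c, hc.2⟩, fun y hy => ?_⟩
        have hyc : y = c := le_antisymm hy.2 hy.1
        rw [hyc, ← hzero]
      have hZne : Z.Nonempty := ⟨c, hcZ⟩
      have hZbdd : BddAbove Z := ⟨1, fun z hz => hz.1.2⟩
      set s : ℝ := sSup Z with hsdef
      have hcs : c ≤ s := le_csSup hZbdd hcZ
      have hs1 : s ≤ 1 := csSup_le hZne (fun z hz => hz.1.2)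
      have hs0 : (0:ℝ) ≤ s := le_trans hc.1 hcs
      have hs01 : s ∈ Icc (0:ℝ) 1 := ⟨hs0, hs1⟩
      have hvIco : ∀ y ∈ Ico c s, v y = 0 := by
        intro y hy
        obtain ⟨z, hzZ, hyz⟩ := exists_lt_of_lt_csSup hZne hy.2
        exact hzZ.2 y ⟨hy.1, le_of_lt hyz⟩
      have hvs : v s = 0 := by
        rcases eq_or_lt_of_le hcs with h | h
        · rw [← h, ← hzero]
        · have h1 : Tendsto v (𝓝[<] s) (𝓝 (v s)) :=
            (hvc.tendsto s).mono_left nhdsWithin_le_nhds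
          have h2 : ∀ᶠ y in 𝓝[<] s, v y = 0 := by
            filter_upwards [Ioo_mem_nhdsLT_of_mem (Set.mem_Ioc.2 ⟨h, le_refl s⟩)] with y hy
            exact hvIco y ⟨le_of_lt hy.1, hy.2⟩
          have h3 : Tendsto v (𝓝[<] s) (𝓝 0) := by
            rw [tendsto_congr' h2]; exact tendsto_const_nhds
          exact tendsto_nhds_unique h1 h3
      have hvIcc : ∀ y ∈ Icc c s, v y = 0 := by
        intro y hy
        rcases lt_or_eq_of_le hy.2 with h | h
        · exact hvIco y ⟨hy.1, h⟩
        · rw [h, hvs]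
      have hv's : v' s = 0 := by
        have heq := hode c hc s hs01
        have hzero' : (∫ t in c..s, γ t * v t) = 0 := by
          rw [intervalIntegral.integral_congr (g := fun _ => (0:ℝ))
            (fun t ht => by rw [uIcc_of_le hcs] at ht; rw [hvIcc t ht, mul_zero])]
          exact intervalIntegral.integral_zero
        rw [hzero'] at heq
        linarith
      -- s must be 1
      have hsone : s = 1 := by
        by_contra hsne
        have hslt : s < 1 := lt_of_le_of_ne hs1 hsne
        -- find d ∈ (s, 1] with ∫_s^d γ < 1/2
        have hγcont : ContinuousOn (fun t => ∫ u in s..t, γ u) (Icc s 1) := by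
          have h := intervalIntegral.continuousOn_primitive_interval'
            (hγsub s 1 hs0 le_rfl hs1) (by rw [uIcc_of_le hs1]; exact ⟨le_refl s, hs1⟩)
          rwa [uIcc_of_le hs1] at h
        have hcw : ContinuousWithinAt (fun t => ∫ u in s..t, γ u) (Icc s 1) s :=
          hγcont s ⟨le_refl s, hs1⟩
        have hmem : (fun t => ∫ u in s..t, γ u) ⁻¹' (Iio (1/2)) ∈ 𝓝[Icc s 1] s := by
          apply hcw
          apply Iio_mem_nhds
          show (∫ u in s..s, γ u) < 1/2
          rw [intervalIntegral.integral_same]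
          norm_num
        obtain ⟨ε, hε, hball⟩ := Metric.mem_nhdsWithin_iff.1 hmem
        set d : ℝ := min 1 (s + ε/2) with hddef
        have hd1 : d ≤ 1 := min_le_left _ _
        have hsd : s < d := lt_min hslt (by linarith)
        have hdball : d ∈ Metric.ball s ε := by
          rw [Metric.mem_ball, Real.dist_eq, abs_of_nonneg (by linarith : (0:ℝ) ≤ d - s)]
          have : d ≤ s + ε/2 := min_le_right _ _
          linarith
        have hγd : (∫ u in s..d, γ u) < 1/2 :=
          hball ⟨hdball, ⟨hsd.le, hd1⟩⟩
        have hd01 : d ∈ Icc (0:ℝ) 1 := ⟨le_trans hs0 hsd.le, hd1⟩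
        -- max of v on [s,d]
        obtain ⟨m, hm, hmax⟩ := (isCompact_Icc (a := s) (b := d)).exists_isMaxOn
          ⟨s, left_mem_Icc.2 hsd.le⟩ hvc.continuousOn
        have hm01 : m ∈ Icc (0:ℝ) 1 := ⟨le_trans hs0 hm.1, le_trans hm.2 hd1⟩
        have hM0 : 0 ≤ v m := hnn m hm01
        have hv'bd : ∀ x ∈ Icc s d, v' x ≤ (v m) / 2 := by
          intro x hxsd
          have hx01 : x ∈ Icc (0:ℝ) 1 := ⟨le_trans hs0 hxsd.1, le_trans hxsd.2 hd1⟩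
          have heq := hode s hs01 x hx01
          have hle := key_le s x (v m) hs01 hx01 hxsd.1
            (fun t ht => hmax ⟨ht.1, le_trans ht.2 hxsd.2⟩)
          have h1 : (∫ u in s..x, γ u) ≤ ∫ u in s..d, γ u := by
            have hsplit : (∫ u in s..x, γ u) + (∫ u in x..d, γ u) = ∫ u in s..d, γ u :=
              intervalIntegral.integral_add_adjacent_intervals
                (hγsub s x hs0 hx01.2 hxsd.1) (hγsub x d hx01.1 hd1 hxsd.2)
            have h2 := hγmono x d hx01 hd01 hxsd.2
            linarith
          have h2 : (∫ u in s..x, γ u) * v m ≤ (1/2) * v m :=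
            mul_le_mul_of_nonneg_right (le_trans h1 hγd.le) hM0
          rw [hv's] at heq
          linarith
        have h3 := hftc s m
        rw [hvs] at h3
        have hint : (∫ t in s..m, v' t) ≤ (m - s) * (v m / 2) := by
          calc (∫ t in s..m, v' t) ≤ ∫ t in s..m, ((v m)/2) :=
                intervalIntegral.integral_mono_on hm.1 (hv'c.intervalIntegrable _ _)
                  intervalIntegrable_const (fun t ht => hv'bd t ⟨ht.1, le_trans ht.2 hm.2⟩)
            _ = (m - s) * (v m / 2) := by rw [intervalIntegral.integral_const, smul_eq_mul]
        have hms : m - s ≤ 1 := by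
          have := hm.2; have := hd1; have := hs0; linarith
        have h4 : (m - s) * (v m / 2) ≤ 1 * (v m / 2) :=
          mul_le_mul_of_nonneg_right hms (by linarith)
        have hMz : v m ≤ 0 := by linarith
        have hvd0 : ∀ y ∈ Icc s d, v y = 0 := fun y hy =>
          le_antisymm (le_trans (hmax hy) hMz)
            (hnn y ⟨le_trans hs0 hy.1, le_trans hy.2 hd1⟩)
        have hdZ : d ∈ Z := by
          refine ⟨⟨le_trans hcs hsd.le, hd1⟩, fun y hy => ?_⟩
          rcases le_or_gt y s with h | h
          · exact hvIcc y ⟨hy.1, h⟩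
          · exact hvd0 y ⟨h.le, hy.2⟩
        have : d ≤ s := le_csSup hZbdd hdZ
        linarith
      rw [hsone] at hvs
      rw [hvs] at hv1
      exact zero_ne_one hv1
  intro x hx
  refine ⟨hpos x hx, ?_⟩
  -- upper bound
  by_contra hgt
  push_neg at hgt
  obtain ⟨c, hc, hcmax⟩ := (isCompact_Icc (a := (0:ℝ)) (b := 1)).exists_isMaxOn
    ⟨0, left_mem_Icc.2 zero_le_one⟩ hvc.continuousOn
  have hvcgt : 1 < v c := lt_of_lt_of_le hgt (hcmax hx)
  have hc0 : c ≠ 0 := by rintro rfl; rw [hv0] at hvcgt; linarith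
  have hc1 : c ≠ 1 := by rintro rfl; rw [hv1] at hvcgt; linarith
  have hcI : c ∈ Ioo (0:ℝ) 1 := ⟨lt_of_le_of_ne hc.1 (Ne.symm hc0), lt_of_le_of_ne hc.2 hc1⟩
  have hv'c0 : v' c = 0 :=
    (hcmax.isLocalMax (Icc_mem_nhds hcI.1 hcI.2)).hasDerivAt_eq_zero (hvd c)
  have hv'np : ∀ y ∈ Icc (0:ℝ) c, v' y ≤ 0 := by
    intro y hy
    have hy01 : y ∈ Icc (0:ℝ) 1 := ⟨hy.1, le_trans hy.2 hc.2⟩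
    have heq := hode y hy01 c hc
    have hge := key_ge y c 0 hy01 hc hy.2
      (fun t ht => (hpos t ⟨le_trans hy.1 ht.1, le_trans ht.2 hc.2⟩).le)
    rw [mul_zero] at hge
    linarith
  have hint : (∫ t in (0:ℝ)..c, v' t) ≤ 0 := by
    calc (∫ t in (0:ℝ)..c, v' t) ≤ ∫ t in (0:ℝ)..c, (0:ℝ) :=
          intervalIntegral.integral_mono_on hc.1 (hv'c.intervalIntegrable _ _)
            intervalIntegrable_const hv'np
      _ = 0 := intervalIntegral.integral_zero
  have hd := hftc 0 c
  rw [hv0] at hd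
  linarith

lemma caseA (γ w w' : ℝ → ℝ)
    (hγIcc : IntegrableOn γ (Icc (0:ℝ) 1))
    (hγpos : ∀ᵐ t ∂(volume : Measure ℝ), t ∈ Icc (0:ℝ) 1 → 0 ≤ γ t)
    (hw : ∀ x ∈ Icc (0:ℝ) 1, w x = w 0 + ∫ t in (0:ℝ)..x, w' t)
    (hw' : ∀ x ∈ Icc (0:ℝ) 1, w' x = w' 0 + ∫ t in (0:ℝ)..x, γ t * w t)
    (hw0 : w 0 = 1) (hw1 : w 1 = 1)
    (hP : IntervalIntegrable w' volume 0 1) :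
    ∀ x ∈ Icc (0:ℝ) 1, 0 < w x ∧ w x ≤ 1 := by
  have hu : uIcc (0:ℝ) 1 = Icc 0 1 := uIcc_of_le zero_le_one
  have hγI : IntervalIntegrable γ volume 0 1 := by
    apply IntegrableOn.intervalIntegrable; rwa [hu]
  -- w is continuous on [0,1]
  have hwc : ContinuousOn w (Icc (0:ℝ) 1) := by
    have h1 : ContinuousOn (fun x => w 0 + ∫ t in (0:ℝ)..x, w' t) (Icc (0:ℝ) 1) := by
      apply ContinuousOn.add continuousOn_const
      have := intervalIntegral.continuousOn_primitive_interval' hP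
        (by rw [hu]; exact left_mem_Icc.2 zero_le_one)
      rwa [hu] at this
    exact h1.congr hw
  -- w bounded on [0,1]
  obtain ⟨C, hC⟩ := (isCompact_Icc (a := (0:ℝ)) (b := 1)).exists_bound_of_continuousOn hwc
  -- γ * w integrable on [0,1]
  have hγwIcc : IntegrableOn (fun t => γ t * w t) (Icc (0:ℝ) 1) := by
    refine Integrable.mono' (g := fun t => |γ t| * C) (hγIcc.abs.mul_const C)
      ((hγIcc.aestronglyMeasurable.mul (hwc.aestronglyMeasurable measurableSet_Icc))) ?_
    filter_upwards [ae_restrict_mem measurableSet_Icc] with t ht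
    rw [Real.norm_eq_abs, abs_mul]
    have h1 : |w t| ≤ C := by
      have := hC t ht; rwa [Real.norm_eq_abs] at this
    exact mul_le_mul_of_nonneg_left h1 (abs_nonneg _)
  have hγwI : IntervalIntegrable (fun t => γ t * w t) volume 0 1 := by
    apply IntegrableOn.intervalIntegrable; rwa [hu]
  -- w' continuous on [0,1]
  have hw'c : ContinuousOn w' (Icc (0:ℝ) 1) := by
    have h1 : ContinuousOn (fun x => w' 0 + ∫ t in (0:ℝ)..x, γ t * w t) (Icc (0:ℝ) 1) := by
      apply ContinuousOn.add continuousOn_const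
      have := intervalIntegral.continuousOn_primitive_interval' hγwI
        (by rw [hu]; exact left_mem_Icc.2 zero_le_one)
      rwa [hu] at this
    exact h1.congr hw'
  -- clamping
  set e : ℝ → ℝ := fun t => max 0 (min 1 t) with he
  have hecont : Continuous e := continuous_const.max (continuous_const.min continuous_id)
  have hemem : ∀ t, e t ∈ Icc (0:ℝ) 1 :=
    fun t => ⟨le_max_left _ _, max_le zero_le_one (min_le_left _ _)⟩
  have heid : ∀ t ∈ Icc (0:ℝ) 1, e t = t := by
    intro t ht
    simp only [he]
    rw [min_eq_right ht.2, max_eq_right ht.1]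
  set v' : ℝ → ℝ := fun t => w' (e t) with hv'def
  have hv'c : Continuous v' := hw'c.comp_continuous hecont hemem
  have hv'eq : ∀ t ∈ Icc (0:ℝ) 1, v' t = w' t := by
    intro t ht; simp only [hv'def]; rw [heid t ht]
  set v : ℝ → ℝ := fun x => 1 + ∫ t in (0:ℝ)..x, v' t with hvdef
  have hvw : ∀ x ∈ Icc (0:ℝ) 1, v x = w x := by
    intro x hx
    have hsubu : uIcc (0:ℝ) x ⊆ Icc (0:ℝ) 1 := by
      rw [uIcc_of_le hx.1]; exact Icc_subset_Icc le_rfl hx.2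
    have : (∫ t in (0:ℝ)..x, v' t) = ∫ t in (0:ℝ)..x, w' t :=
      intervalIntegral.integral_congr (fun t ht => hv'eq t (hsubu ht))
    simp only [hvdef]
    rw [this, hw x hx, hw0]
  have hvd : ∀ x, HasDerivAt v (v' x) x := by
    intro x
    exact ((hv'c.integral_hasStrictDerivAt 0 x).hasDerivAt).const_add 1
  have hv0 : v 0 = 1 := by simp [hvdef]
  have hv1 : v 1 = 1 := by rw [hvw 1 (right_mem_Icc.2 zero_le_one), hw1]
  have hγvIcc : IntegrableOn (fun t => γ t * v t) (Icc (0:ℝ) 1) :=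
    hγwIcc.congr_fun (fun t ht => by rw [hvw t ht]) measurableSet_Icc
  have hγvI : ∀ x ∈ Icc (0:ℝ) 1, ∀ y ∈ Icc (0:ℝ) 1,
      IntervalIntegrable (fun t => γ t * v t) volume x y := by
    intro x hx y hy
    apply IntegrableOn.intervalIntegrable
    refine hγvIcc.mono_set ?_
    rw [← hu]
    exact uIcc_subset_uIcc (by rwa [hu]) (by rwa [hu])
  have hode : ∀ x ∈ Icc (0:ℝ) 1, ∀ y ∈ Icc (0:ℝ) 1,
      v' y - v' x = ∫ t in x..y, γ t * v t := by
    intro x hx y hy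
    have hQx : IntervalIntegrable (fun t => γ t * w t) volume 0 x := by
      apply IntegrableOn.intervalIntegrable
      refine hγwIcc.mono_set ?_
      rw [← hu]
      exact uIcc_subset_uIcc (by rw [hu]; exact left_mem_Icc.2 zero_le_one) (by rwa [hu])
    have hQy : IntervalIntegrable (fun t => γ t * w t) volume 0 y := by
      apply IntegrableOn.intervalIntegrable
      refine hγwIcc.mono_set ?_
      rw [← hu]
      exact uIcc_subset_uIcc (by rw [hu]; exact left_mem_Icc.2 zero_le_one) (by rwa [hu])
    have hsub : (∫ t in (0:ℝ)..y, γ t * w t) - ∫ t in (0:ℝ)..x, γ t * w t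
        = ∫ t in x..y, γ t * w t := intervalIntegral.integral_interval_sub_left hQy hQx
    have hcongr : (∫ t in x..y, γ t * w t) = ∫ t in x..y, γ t * v t := by
      refine intervalIntegral.integral_congr (fun t ht => ?_)
      have ht01 : t ∈ Icc (0:ℝ) 1 := by
        rw [← hu]
        exact uIcc_subset_uIcc (by rwa [hu]) (by rwa [hu]) ht
      rw [hvw t ht01]
    rw [hv'eq x hx, hv'eq y hy, hw' x hx, hw' y hy, ← hcongr, ← hsub]
    ring
  intro x hx
  rw [← hvw x hx]
  exact keyA γ v v' hγI hγpos hγvI hv'c hvd hode hv0 hv1 x hx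


lemma caseB (γ w w' : ℝ → ℝ)
    (hγIcc : IntegrableOn γ (Icc (0:ℝ) 1))
    (hγpos : ∀ᵐ t ∂(volume : Measure ℝ), t ∈ Icc (0:ℝ) 1 → 0 ≤ γ t)
    (hw : ∀ x ∈ Icc (0:ℝ) 1, w x = w 0 + ∫ t in (0:ℝ)..x, w' t)
    (hw' : ∀ x ∈ Icc (0:ℝ) 1, w' x = w' 0 + ∫ t in (0:ℝ)..x, γ t * w t)
    (hP : ¬ IntervalIntegrable w' volume 0 1) : False := by
  have hu : uIcc (0:ℝ) 1 = Icc 0 1 := uIcc_of_le zero_le_one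
  have hγI : IntervalIntegrable γ volume 0 1 := by
    apply IntegrableOn.intervalIntegrable; rwa [hu]
  have hmono : ∀ (f : ℝ → ℝ) (x y : ℝ), 0 ≤ x → x ≤ y →
      IntervalIntegrable f volume 0 y → IntervalIntegrable f volume 0 x := by
    intro f x y h0 hxy h
    refine h.mono_set ?_
    rw [uIcc_of_le h0, uIcc_of_le (le_trans h0 hxy)]
    exact Icc_subset_Icc le_rfl hxy
  -- the suprema of integrability
  obtain ⟨a, ha⟩ : ∃ a : ℝ, a = sSup {x | x ∈ Icc (0:ℝ) 1 ∧ IntervalIntegrable w' volume 0 x} :=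
    ⟨_, rfl⟩
  obtain ⟨b, hb⟩ : ∃ b : ℝ,
      b = sSup {x | x ∈ Icc (0:ℝ) 1 ∧ IntervalIntegrable (fun t => γ t * w t) volume 0 x} :=
    ⟨_, rfl⟩
  have h0S : (0:ℝ) ∈ {x | x ∈ Icc (0:ℝ) 1 ∧ IntervalIntegrable w' volume 0 x} :=
    ⟨left_mem_Icc.2 zero_le_one, IntervalIntegrable.refl⟩
  have h0T : (0:ℝ) ∈ {x | x ∈ Icc (0:ℝ) 1 ∧
      IntervalIntegrable (fun t => γ t * w t) volume 0 x} :=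
    ⟨left_mem_Icc.2 zero_le_one, IntervalIntegrable.refl⟩
  have hSbdd : BddAbove {x | x ∈ Icc (0:ℝ) 1 ∧ IntervalIntegrable w' volume 0 x} :=
    ⟨1, fun z hz => hz.1.2⟩
  have hTbdd : BddAbove {x | x ∈ Icc (0:ℝ) 1 ∧
      IntervalIntegrable (fun t => γ t * w t) volume 0 x} :=
    ⟨1, fun z hz => hz.1.2⟩
  have ha0 : 0 ≤ a := by rw [ha]; exact le_csSup hSbdd h0S
  have hb0 : 0 ≤ b := by rw [hb]; exact le_csSup hTbdd h0T
  have ha1 : a ≤ 1 := by rw [ha]; exact csSup_le ⟨0, h0S⟩ (fun z hz => hz.1.2)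
  have hb1 : b ≤ 1 := by rw [hb]; exact csSup_le ⟨0, h0T⟩ (fun z hz => hz.1.2)
  have hSa : ∀ x ∈ Icc (0:ℝ) 1, x < a → IntervalIntegrable w' volume 0 x := by
    intro x hx hxa
    rw [ha] at hxa
    obtain ⟨z, hzS, hxz⟩ := exists_lt_of_lt_csSup ⟨0, h0S⟩ hxa
    exact hmono _ x z hx.1 hxz.le hzS.2
  have hTb : ∀ x ∈ Icc (0:ℝ) 1, x < b →
      IntervalIntegrable (fun t => γ t * w t) volume 0 x := by
    intro x hx hxb
    rw [hb] at hxb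
    obtain ⟨z, hzT, hxz⟩ := exists_lt_of_lt_csSup ⟨0, h0T⟩ hxb
    exact hmono _ x z hx.1 hxz.le hzT.2
  have haS : ∀ x ∈ Icc (0:ℝ) 1, a < x → ¬ IntervalIntegrable w' volume 0 x := by
    intro x hx hax hint
    rw [ha] at hax
    exact absurd (le_csSup hSbdd ⟨hx, hint⟩) (not_le.2 hax)
  have haT : ∀ x ∈ Icc (0:ℝ) 1, b < x →
      ¬ IntervalIntegrable (fun t => γ t * w t) volume 0 x := by
    intro x hx hbx hint
    rw [hb] at hbx
    exact absurd (le_csSup hTbdd ⟨hx, hint⟩) (not_le.2 hbx)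
  have hw'const : ∀ x ∈ Icc (0:ℝ) 1, b < x → w' x = w' 0 := by
    intro x hx hbx
    rw [hw' x hx, intervalIntegral.integral_undef (haT x hx hbx), add_zero]
  -- continuity of primitives
  have hw'contOn : ∀ t ∈ Icc (0:ℝ) 1, IntervalIntegrable (fun u => γ u * w u) volume 0 t →
      ContinuousOn w' (Icc 0 t) := by
    intro t ht hQ
    have h1 : ContinuousOn (fun y => w' 0 + ∫ u in (0:ℝ)..y, γ u * w u) (Icc 0 t) := by
      apply ContinuousOn.add continuousOn_const
      have := intervalIntegral.continuousOn_primitive_interval' hQ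
        (by rw [uIcc_of_le ht.1]; exact left_mem_Icc.2 ht.1)
      rwa [uIcc_of_le ht.1] at this
    exact h1.congr (fun y hy => hw' y ⟨hy.1, le_trans hy.2 ht.2⟩)
  have hwcontOn : ∀ t ∈ Icc (0:ℝ) 1, IntervalIntegrable w' volume 0 t →
      ContinuousOn w (Icc 0 t) := by
    intro t ht hPt
    have h1 : ContinuousOn (fun y => w 0 + ∫ u in (0:ℝ)..y, w' u) (Icc 0 t) := by
      apply ContinuousOn.add continuousOn_const
      have := intervalIntegral.continuousOn_primitive_interval' hPt
        (by rw [uIcc_of_le ht.1]; exact left_mem_Icc.2 ht.1)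
      rwa [uIcc_of_le ht.1] at this
    exact h1.congr (fun y hy => hw y ⟨hy.1, le_trans hy.2 ht.2⟩)
  -- b ≤ a
  have hba : b ≤ a := by
    by_contra hab
    push_neg at hab
    have hax : a < (a+b)/2 := by linarith
    have hxb : (a+b)/2 < b := by linarith
    have hx01 : (a+b)/2 ∈ Icc (0:ℝ) 1 := ⟨le_trans ha0 hax.le, le_trans hxb.le hb1⟩
    have hQx := hTb _ hx01 hxb
    have hcont := hw'contOn _ hx01 hQx
    have : IntervalIntegrable w' volume 0 ((a+b)/2) := by
      apply IntegrableOn.intervalIntegrable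
      rw [uIcc_of_le hx01.1]
      exact hcont.integrableOn_Icc
    exact haS _ hx01 hax this
  -- rebased identities
  have hwsub : ∀ x y : ℝ, x ∈ Icc (0:ℝ) 1 → y ∈ Icc (0:ℝ) 1 →
      IntervalIntegrable w' volume 0 x → IntervalIntegrable w' volume 0 y →
      w y - w x = ∫ t in x..y, w' t := by
    intro x y hx hy hPx hPy
    rw [hw x hx, hw y hy]
    have := intervalIntegral.integral_interval_sub_left hPy hPx
    linarith [this]
  have hw'sub : ∀ x y : ℝ, x ∈ Icc (0:ℝ) 1 → y ∈ Icc (0:ℝ) 1 →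
      IntervalIntegrable (fun t => γ t * w t) volume 0 x →
      IntervalIntegrable (fun t => γ t * w t) volume 0 y →
      w' y - w' x = ∫ t in x..y, γ t * w t := by
    intro x y hx hy hQx hQy
    rw [hw' x hx, hw' y hy]
    have := intervalIntegral.integral_interval_sub_left hQy hQx
    linarith [this]
  -- the function Φ
  have hγsub : ∀ x y : ℝ, 0 ≤ x → y ≤ 1 → x ≤ y → IntervalIntegrable γ volume x y := by
    intro x y h0 h1 hxy
    refine hγI.mono_set ?_
    rw [uIcc_of_le hxy, uIcc_of_le zero_le_one]
    exact Icc_subset_Icc h0 h1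
  obtain ⟨Φ, hΦdef⟩ : ∃ Φ : ℝ → ℝ, Φ = fun t => t + ∫ u in (0:ℝ)..t, γ u := ⟨_, rfl⟩
  have hΦcont : ContinuousOn Φ (Icc (0:ℝ) 1) := by
    rw [hΦdef]
    apply ContinuousOn.add continuousOn_id
    have := intervalIntegral.continuousOn_primitive_interval' hγI
      (by rw [hu]; exact left_mem_Icc.2 zero_le_one)
    rwa [hu] at this
  have hΦ0 : Φ 0 = 0 := by rw [hΦdef]; simp
  have hΦdiff : ∀ x y : ℝ, x ∈ Icc (0:ℝ) 1 → y ∈ Icc (0:ℝ) 1 → x ≤ y →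
      Φ y - Φ x = (y - x) + ∫ u in x..y, γ u := by
    intro x y hx hy hxy
    rw [hΦdef]
    simp only
    have := intervalIntegral.integral_interval_sub_left
      (hγsub 0 y le_rfl hy.2 hy.1) (hγsub 0 x le_rfl hx.2 hx.1)
    linarith [this]
  have hγnonneg : ∀ x y : ℝ, x ∈ Icc (0:ℝ) 1 → y ∈ Icc (0:ℝ) 1 → x ≤ y →
      0 ≤ ∫ u in x..y, γ u := by
    intro x y hx hy hxy
    refine intervalIntegral.integral_nonneg_of_ae_restrict hxy ?_
    filter_upwards [ae_restrict_mem measurableSet_Icc, ae_restrict_of_ae hγpos] with t ht hγt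
    exact hγt ⟨le_trans hx.1 ht.1, le_trans ht.2 hy.2⟩
  have hΦmono : ∀ x y : ℝ, x ∈ Icc (0:ℝ) 1 → y ∈ Icc (0:ℝ) 1 → x ≤ y → Φ x ≤ Φ y := by
    intro x y hx hy hxy
    have h1 := hΦdiff x y hx hy hxy
    have h2 := hγnonneg x y hx hy hxy
    linarith
  have hΦnn : ∀ t ∈ Icc (0:ℝ) 1, t ≤ Φ t := by
    intro t ht
    have h1 := hγnonneg 0 t (left_mem_Icc.2 zero_le_one) ht ht.1
    have h2 : Φ t = t + ∫ u in (0:ℝ)..t, γ u := by rw [hΦdef]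
    linarith
  -- energy
  obtain ⟨E, hEdef⟩ : ∃ E : ℝ → ℝ, E = fun t => |w t| + |w' t| := ⟨_, rfl⟩
  have hEeq : ∀ t, E t = |w t| + |w' t| := fun t => by rw [hEdef]
  have hE0 : ∀ t, 0 ≤ E t := fun t => by
    rw [hEeq t]; exact add_nonneg (abs_nonneg _) (abs_nonneg _)
  -- main induction
  have hInd : ∀ k : ℕ, ∀ t ∈ Icc (0:ℝ) 1, t < b → Φ t ≤ k / 2 →
      E t ≤ (E 0 + 1) * 2 ^ k := by
    intro k
    induction k with
    | zero =>
      intro t ht htb hΦt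
      have h1 := hΦnn t ht
      have hcast : ((0:ℕ):ℝ) = 0 := by norm_num
      rw [hcast] at hΦt
      have ht0 : t = 0 := le_antisymm (by linarith) ht.1
      rw [ht0, pow_zero, mul_one]
      linarith [hE0 0]
    | succ k ih =>
      intro t ht htb hΦt
      rcases le_or_gt (Φ t) (k / 2) with hk | hk
      · have h1 := ih t ht htb hk
        have h2 : (E 0 + 1) * 2 ^ k ≤ (E 0 + 1) * 2 ^ (k+1) := by
          apply mul_le_mul_of_nonneg_left _ (by linarith [hE0 0])
          apply pow_le_pow_right₀ (by norm_num) (Nat.le_succ k)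
        linarith
      · -- find s with Φ s = k/2
        have hΦcont' : ContinuousOn Φ (Icc 0 t) :=
          hΦcont.mono (Icc_subset_Icc le_rfl ht.2)
        have hmem : (k:ℝ)/2 ∈ Icc (Φ 0) (Φ t) := by
          rw [hΦ0]
          exact ⟨by positivity, hk.le⟩
        obtain ⟨s, hs, hΦs⟩ := intermediate_value_Icc ht.1 hΦcont' hmem
        have hs01 : s ∈ Icc (0:ℝ) 1 := ⟨hs.1, le_trans hs.2 ht.2⟩
        have hsb : s < b := lt_of_le_of_lt hs.2 htb
        have hEs := ih s hs01 hsb (le_of_eq hΦs)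
        have hta : t < a := lt_of_lt_of_le htb hba
        have hPt := hSa t ht hta
        have hQt := hTb t ht htb
        have hwc : ContinuousOn w (Icc 0 t) := hwcontOn t ht hPt
        have hw'c : ContinuousOn w' (Icc 0 t) := hw'contOn t ht hQt
        have hEc : ContinuousOn E (Icc 0 t) := by
          rw [hEdef]; exact hwc.abs.add hw'c.abs
        obtain ⟨m, hm, hmax⟩ := (isCompact_Icc (a := s) (b := t)).exists_isMaxOn
          ⟨s, left_mem_Icc.2 hs.2⟩ (hEc.mono (Icc_subset_Icc hs.1 le_rfl))
        have hm0t : m ∈ Icc 0 t := ⟨le_trans hs.1 hm.1, hm.2⟩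
        have hm01 : m ∈ Icc (0:ℝ) 1 := ⟨hm0t.1, le_trans hm.2 ht.2⟩
        have hmb : m < b := lt_of_le_of_lt hm.2 htb
        have hma : m < a := lt_of_lt_of_le hmb hba
        have hM0 : 0 ≤ E m := hE0 m
        have hEM : ∀ x ∈ Icc s m, E x ≤ E m :=
          fun x hx => hmax ⟨hx.1, le_trans hx.2 hm.2⟩
        have hw'im : IntervalIntegrable w' volume s m := by
          apply IntegrableOn.intervalIntegrable
          rw [uIcc_of_le hm.1]
          exact (hw'c.mono (Icc_subset_Icc hs.1 hm.2)).integrableOn_Icc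
        have hγwim : IntervalIntegrable (fun u => γ u * w u) volume s m := by
          refine hQt.mono_set ?_
          rw [uIcc_of_le hm.1, uIcc_of_le ht.1]
          exact Icc_subset_Icc hs.1 hm.2
        have hγim : IntervalIntegrable γ volume s m := hγsub s m hs.1 hm01.2 hm.1
        -- bound |w m|
        have hwm : |w m| ≤ |w s| + (m - s) * E m := by
          have h1 := hwsub s m hs01 hm01 (hSa s hs01 (lt_of_lt_of_le hsb hba)) (hSa m hm01 hma)
          have h2 : |∫ u in s..m, w' u| ≤ ∫ u in s..m, |w' u| :=
            intervalIntegral.abs_integral_le_integral_abs hm.1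
          have h3 : (∫ u in s..m, |w' u|) ≤ ∫ u in s..m, E m := by
            apply intervalIntegral.integral_mono_on hm.1 hw'im.abs intervalIntegrable_const
            intro x hx
            have h5 := hEM x hx
            rw [hEeq x] at h5
            linarith [abs_nonneg (w x)]
          have h4 : (∫ u in s..m, E m) = (m - s) * E m := by
            rw [intervalIntegral.integral_const, smul_eq_mul]
          have h6 : w m = w s + ∫ u in s..m, w' u := by linarith
          calc |w m| ≤ |w s| + |∫ u in s..m, w' u| := by
                rw [h6]; exact abs_add_le _ _
            _ ≤ |w s| + (m - s) * E m := by linarith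
        -- bound |w' m|
        have hw'm : |w' m| ≤ |w' s| + (∫ u in s..m, γ u) * E m := by
          have h1 := hw'sub s m hs01 hm01 (hTb s hs01 hsb) (hTb m hm01 hmb)
          have h2 : |∫ u in s..m, γ u * w u| ≤ ∫ u in s..m, |γ u * w u| :=
            intervalIntegral.abs_integral_le_integral_abs hm.1
          have h3 : (∫ u in s..m, |γ u * w u|) ≤ ∫ u in s..m, γ u * E m := by
            refine intervalIntegral.integral_mono_ae_restrict hm.1 hγwim.abs
              (hγim.mul_const (E m)) ?_
            filter_upwards [ae_restrict_mem measurableSet_Icc, ae_restrict_of_ae hγpos]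
              with u husm hγu
            have hu01 : u ∈ Icc (0:ℝ) 1 :=
              ⟨le_trans hs.1 husm.1, le_trans husm.2 hm01.2⟩
            have hγu' : 0 ≤ γ u := hγu hu01
            have hwu : |w u| ≤ E m := by
              have h5 := hEM u husm
              rw [hEeq u] at h5
              linarith [abs_nonneg (w' u)]
            rw [abs_mul, abs_of_nonneg hγu']
            exact mul_le_mul_of_nonneg_left hwu hγu'
          have h4 : (∫ u in s..m, γ u * E m) = (∫ u in s..m, γ u) * E m :=
            intervalIntegral.integral_mul_const (E m) γ
          have h6 : w' m = w' s + ∫ u in s..m, γ u * w u := by linarith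
          calc |w' m| ≤ |w' s| + |∫ u in s..m, γ u * w u| := by
                rw [h6]; exact abs_add_le _ _
            _ ≤ |w' s| + (∫ u in s..m, γ u) * E m := by linarith
        -- the contraction
        have hΦm : (m - s) + (∫ u in s..m, γ u) ≤ 1/2 := by
          have h1 := hΦdiff s m hs01 hm01 hm.1
          have h2 := hΦmono m t hm01 ht hm.2
          push_cast at hΦt
          linarith
        have hsum : ((m - s) + (∫ u in s..m, γ u)) * E m ≤ (1/2) * E m :=
          mul_le_mul_of_nonneg_right hΦm hM0
        have hdist : ((m - s) + (∫ u in s..m, γ u)) * E m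
            = (m - s) * E m + (∫ u in s..m, γ u) * E m := by ring
        have hMle : E m ≤ E s + (1/2) * E m := by
          have hEm := hEeq m
          have hEs' := hEeq s
          linarith
        have hM2 : E m ≤ 2 * E s := by linarith
        have hfinal : E t ≤ E m := hmax ⟨hs.2, le_refl t⟩
        have hpow : (E 0 + 1) * 2 ^ (k+1) = 2 * ((E 0 + 1) * 2 ^ k) := by ring
        linarith
  -- uniform bound on [0, b)
  obtain ⟨k₀, hk₀⟩ := exists_nat_ge (2 * Φ 1)
  obtain ⟨K, hKdef⟩ : ∃ K : ℝ, K = (E 0 + 1) * 2 ^ k₀ := ⟨_, rfl⟩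
  have hbound : ∀ t ∈ Icc (0:ℝ) 1, t < b → |w t| ≤ K := by
    intro t ht htb
    have h1 : Φ t ≤ (k₀ : ℝ) / 2 := by
      have := hΦmono t 1 ht (right_mem_Icc.2 zero_le_one) ht.2
      linarith
    have h2 := hInd k₀ t ht htb h1
    rw [hEeq t] at h2
    rw [hKdef]
    linarith [abs_nonneg (w' t)]
  -- γ w is integrable on [0, b]
  have hQb : IntervalIntegrable (fun t => γ t * w t) volume 0 b := by
    rw [intervalIntegrable_iff_integrableOn_Ioc_of_le hb0]
    have hIoo : IntegrableOn (fun t => γ t * w t) (Ioo 0 b) := by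
      have hwmeas : AEStronglyMeasurable w (volume.restrict (Ioo 0 b)) := by
        have hwIco : ContinuousOn w (Ico 0 b) := by
          intro x hx
          have hxt : x < (x + b)/2 := by linarith [hx.2]
          have htb' : (x + b)/2 < b := by linarith [hx.2]
          have ht01 : (x + b)/2 ∈ Icc (0:ℝ) 1 :=
            ⟨by linarith [hx.1, hx.2, hb0], le_trans htb'.le hb1⟩
          have hc := hwcontOn _ ht01 (hSa _ ht01 (lt_of_lt_of_le htb' hba))
          have hcx : ContinuousWithinAt w (Icc 0 ((x + b)/2)) x := hc x ⟨hx.1, hxt.le⟩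
          refine hcx.mono_of_mem_nhdsWithin ?_
          rw [mem_nhdsWithin]
          exact ⟨Iio ((x + b)/2), isOpen_Iio, hxt, fun y hy => ⟨hy.2.1, le_of_lt hy.1⟩⟩
        exact (hwIco.mono Ioo_subset_Ico_self).aestronglyMeasurable measurableSet_Ioo
      have hsubIcc : Ioo (0:ℝ) b ⊆ Icc 0 1 :=
        Ioo_subset_Icc_self.trans (Icc_subset_Icc le_rfl hb1)
      have hγmeas : AEStronglyMeasurable γ (volume.restrict (Ioo 0 b)) :=
        hγIcc.aestronglyMeasurable.mono_set hsubIcc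
      have hgK : IntegrableOn (fun t => |γ t| * K) (Icc (0:ℝ) 1) := hγIcc.abs.mul_const K
      refine Integrable.mono' (hgK.mono_set hsubIcc) (hγmeas.mul hwmeas) ?_
      filter_upwards [ae_restrict_mem measurableSet_Ioo] with t ht
      rw [Real.norm_eq_abs, abs_mul]
      exact mul_le_mul_of_nonneg_left
        (hbound t ⟨ht.1.le, le_trans ht.2.le hb1⟩ ht.2) (abs_nonneg _)
    exact hIoo.congr_set_ae (Ioo_ae_eq_Ioc).symm
  -- conclude : w' is integrable on [0,1]
  have hw'Icc0b : IntegrableOn w' (Icc 0 b) :=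
    (hw'contOn b ⟨hb0, hb1⟩ hQb).integrableOn_Icc
  have hw'Iocb1 : IntegrableOn w' (Ioc b 1) := by
    have hconst : IntegrableOn (fun _ => w' 0) (Ioc b 1) :=
      integrableOn_const measure_Ioc_lt_top.ne
    refine hconst.congr_fun ?_ measurableSet_Ioc
    intro y hy
    exact (hw'const y ⟨le_trans hb0 hy.1.le, hy.2⟩ hy.1).symm
  have hfin : IntegrableOn w' (Ioc 0 1) := by
    have hunion : IntegrableOn w' (Icc 0 b ∪ Ioc b 1) := hw'Icc0b.union hw'Iocb1
    refine hunion.mono_set ?_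
    intro y hy
    rcases le_or_gt y b with h | h
    · exact Or.inl ⟨hy.1.le, h⟩
    · exact Or.inr ⟨h, hy.2⟩
  exact hP ((intervalIntegrable_iff_integrableOn_Ioc_of_le zero_le_one).2 hfin)

/- STATEMENT 4: Let γ ∈ L¹(0,1), γ ≥ 0 a.e., and let w ∈ W^{2,1}(0,1) satisfy w'' = γ w a.e.
with w(0) = w(1) = 1. Then 0 < w(x) ≤ 1 on [0,1].
W^{2,1} is encoded by: w is absolutely continuous on [0,1] with derivative w', and w' is
absolutely continuous on [0,1] with a.e. derivative γ·w (which encodes w'' = γw a.e., w'' ∈ L¹). -/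
theorem stmt_4 (γ : ℝ → ℝ) (hγ : IntegrableOn γ (Ioo (0:ℝ) 1))
    (hγpos : ∀ᵐ x ∂(volume.restrict (Ioo (0:ℝ) 1)), 0 ≤ γ x)
    (w w' : ℝ → ℝ)
    (hw : ∀ x ∈ Icc (0:ℝ) 1, w x = w 0 + ∫ t in (0:ℝ)..x, w' t)
    (hw' : ∀ x ∈ Icc (0:ℝ) 1, w' x = w' 0 + ∫ t in (0:ℝ)..x, γ t * w t)
    (hw0 : w 0 = 1) (hw1 : w 1 = 1) :
    ∀ x ∈ Icc (0:ℝ) 1, 0 < w x ∧ w x ≤ 1 := by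
  have hγIcc : IntegrableOn γ (Icc (0:ℝ) 1) := hγ.congr_set_ae Ioo_ae_eq_Icc.symm
  have hγpos' : ∀ᵐ t ∂(volume : Measure ℝ), t ∈ Icc (0:ℝ) 1 → 0 ≤ γ t := by
    have hIoo : ∀ᵐ t ∂(volume : Measure ℝ), t ∈ Ioo (0:ℝ) 1 → 0 ≤ γ t :=
      (ae_restrict_iff' measurableSet_Ioo).1 hγpos
    have h0 : ∀ᵐ t : ℝ ∂volume, t ≠ 0 := by
      rw [ae_iff]
      simpa using measure_singleton (0:ℝ)
    have h1 : ∀ᵐ t : ℝ ∂volume, t ≠ 1 := by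
      rw [ae_iff]
      simpa using measure_singleton (1:ℝ)
    filter_upwards [hIoo, h0, h1] with t htI ht0 ht1 hmem
    exact htI ⟨lt_of_le_of_ne hmem.1 (Ne.symm ht0), lt_of_le_of_ne hmem.2 ht1⟩
  by_cases hP : IntervalIntegrable w' volume 0 1
  · exact caseA γ w w' hγIcc hγpos' hw hw' hw0 hw1 hP
  · exact (caseB γ w w' hγIcc hγpos' hw hw' hP).elim
end

section
/- Let p ∈ (1,∞], let ρ ∈ L^p(0,1) satisfy ρ(x) > 0 for a.e. x ∈ (0,1), and let (α₀,β₀) ∈ ℝ² ∖ {(0,0)}. Define the generating functions g_i : [0,1] → ℝ by g₀(x) = (α₀² + β₀²)^{-1}(β₀ − α₀ x) and, for i ≥ 1, g_i(x) = ∫₀ˣ (∫₀ˢ ρ(σ) g_{i−1}(σ) dσ) ds. Let λ ∈ ℝ and let e ∈ W^{2,p}(0,1) satisfy −e''(x) = λ ρ(x) e(x) for a.e. x ∈ (0,1) and α₀ e(0) + β₀ e'(0) = 0. Set ζ := β₀ e(0) − α₀ e'(0). Then the series Σ_{i≥0} (−λ)^i g_i converges absolutely in W^{2,p}(0,1), and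 e(x) = ζ Σ_{i≥0} (−λ)^i g_i(x) for all x ∈ [0,1]. -/
open MeasureTheory Set Filter Topology

/- STATEMENT 12: expansion of an eigenfunction on the generating functions:
if −e'' = λρe with α₀e(0) + β₀e'(0) = 0 and ζ = β₀e(0) − α₀e'(0), then the series
Σ (−λ)^i g_i converges absolutely in W^{2,p}(0,1) and e = ζ Σ (−λ)^i g_i on [0,1].
The generating functions g_i and their derivatives g_i', g_i'' are as in the paper; absolute
convergence in W^{2,p} is expressed by finiteness of Σ |λ|^i ‖g_i‖_{W^{2,p}} (ENNReal-valued,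
with the W^{2,p} norm ‖·‖_{L^p} + ‖·'‖_{L^p} + ‖·''‖_{L^p}). W^{2,p} membership of e is
encoded by absolute continuity of e and e' with e'' = −λρe ∈ L^p. -/
lemma aux_prim_cont (f : ℝ → ℝ) (hf : IntegrableOn f (Ioc (0:ℝ) 1) volume) :
    ContinuousOn (fun x => ∫ t in (0:ℝ)..x, f t) (Icc (0:ℝ) 1) := by
  have h : IntegrableOn f (uIcc (0:ℝ) 1) volume := by
    rw [uIcc_of_le zero_le_one, integrableOn_Icc_iff_integrableOn_Ioc]
    exact hf
  simpa [uIcc_of_le (zero_le_one (α := ℝ))] using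
    intervalIntegral.continuousOn_primitive_interval h

lemma aux_mul_int (ρ h : ℝ → ℝ) (hρ : IntegrableOn ρ (Ioc (0:ℝ) 1) volume)
    (hh : ContinuousOn h (Icc (0:ℝ) 1)) {x : ℝ} (hx : x ∈ Icc (0:ℝ) 1) :
    IntervalIntegrable (fun σ => ρ σ * h σ) volume 0 x := by
  obtain ⟨C, hC⟩ := isCompact_Icc.exists_bound_of_continuousOn hh
  have hmeas : AEStronglyMeasurable h (volume.restrict (Ioc (0:ℝ) 1)) :=
    (hh.aestronglyMeasurable measurableSet_Icc).mono_measure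
      (Measure.restrict_mono Ioc_subset_Icc_self le_rfl)
  have hbd : ∀ᵐ σ ∂(volume.restrict (Ioc (0:ℝ) 1)), ‖h σ‖ ≤ C :=
    (ae_restrict_iff' measurableSet_Ioc).2 (ae_of_all _ fun σ hσ => hC σ (Ioc_subset_Icc_self hσ))
  have h1 : IntegrableOn (fun σ => h σ * ρ σ) (Ioc (0:ℝ) 1) volume :=
    hρ.bdd_mul hmeas hbd
  have h1' : IntegrableOn (fun σ => ρ σ * h σ) (Ioc (0:ℝ) 1) volume := by
    have : (fun σ => ρ σ * h σ) = fun σ => h σ * ρ σ := funext fun σ => mul_comm _ _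
    rw [this]; exact h1
  rw [intervalIntegrable_iff_integrableOn_Ioc_of_le hx.1]
  exact h1'.mono_set (Ioc_subset_Ioc le_rfl hx.2)

lemma aux_single (ρ h : ℝ → ℝ) (hρ : IntegrableOn ρ (Ioc (0:ℝ) 1) volume)
    (hh : ContinuousOn h (Icc (0:ℝ) 1)) (K : ℝ) (hK : 0 ≤ K) (n : ℕ)
    (hb : ∀ σ ∈ Icc (0:ℝ) 1, |h σ| ≤ K * σ ^ n)
    {s : ℝ} (hs : s ∈ Icc (0:ℝ) 1) :
    |∫ σ in (0:ℝ)..s, ρ σ * h σ| ≤ (∫ t in (0:ℝ)..1, |ρ t|) * (K * s ^ n) := by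
  have h0s : (0:ℝ) ≤ s := hs.1
  have hint := aux_mul_int ρ h hρ hh hs
  have hρint : IntervalIntegrable ρ volume 0 1 := by
    rw [intervalIntegrable_iff_integrableOn_Ioc_of_le zero_le_one]; exact hρ
  have hρints : IntervalIntegrable ρ volume 0 s := by
    rw [intervalIntegrable_iff_integrableOn_Ioc_of_le h0s]
    exact hρ.mono_set (Ioc_subset_Ioc le_rfl hs.2)
  calc |∫ σ in (0:ℝ)..s, ρ σ * h σ|
      ≤ ∫ σ in (0:ℝ)..s, |ρ σ * h σ| := intervalIntegral.abs_integral_le_integral_abs h0s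
    _ ≤ ∫ σ in (0:ℝ)..s, |ρ σ| * (K * s ^ n) := by
        apply intervalIntegral.integral_mono_on h0s hint.abs (hρints.abs.mul_const _)
        intro σ hσ
        rw [abs_mul]
        have h1 : |h σ| ≤ K * σ ^ n := hb σ ⟨hσ.1, hσ.2.trans hs.2⟩
        have h2 : K * σ ^ n ≤ K * s ^ n :=
          mul_le_mul_of_nonneg_left (pow_le_pow_left₀ hσ.1 hσ.2 n) hK
        exact mul_le_mul_of_nonneg_left (h1.trans h2) (abs_nonneg _)
    _ = (∫ σ in (0:ℝ)..s, |ρ σ|) * (K * s ^ n) := intervalIntegral.integral_mul_const _ _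
    _ ≤ (∫ t in (0:ℝ)..1, |ρ t|) * (K * s ^ n) := by
        apply mul_le_mul_of_nonneg_right _ (by positivity)
        apply intervalIntegral.integral_mono_interval le_rfl h0s hs.2
        · exact ae_of_all _ fun t => abs_nonneg _
        · exact hρint.abs

lemma aux_double (ρ h : ℝ → ℝ) (hρ : IntegrableOn ρ (Ioc (0:ℝ) 1) volume)
    (hh : ContinuousOn h (Icc (0:ℝ) 1)) (K : ℝ) (hK : 0 ≤ K) (n : ℕ)
    (hb : ∀ σ ∈ Icc (0:ℝ) 1, |h σ| ≤ K * σ ^ n)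
    {x : ℝ} (hx : x ∈ Icc (0:ℝ) 1) :
    |∫ s in (0:ℝ)..x, ∫ σ in (0:ℝ)..s, ρ σ * h σ|
      ≤ (∫ t in (0:ℝ)..1, |ρ t|) * K * x ^ (n+1) / (n+1) := by
  have h0x : (0:ℝ) ≤ x := hx.1
  set M := ∫ t in (0:ℝ)..1, |ρ t| with hM
  have hM0 : 0 ≤ M := intervalIntegral.integral_nonneg zero_le_one fun t _ => abs_nonneg _
  have hPint : IntegrableOn (fun σ => ρ σ * h σ) (Ioc (0:ℝ) 1) volume := by
    have := aux_mul_int ρ h hρ hh (x := 1) ⟨zero_le_one, le_rfl⟩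
    rwa [intervalIntegrable_iff_integrableOn_Ioc_of_le zero_le_one] at this
  have hPcont : ContinuousOn (fun s => ∫ σ in (0:ℝ)..s, ρ σ * h σ) (Icc (0:ℝ) 1) :=
    aux_prim_cont _ hPint
  have hsub : uIcc (0:ℝ) x ⊆ Icc 0 1 := by
    rw [uIcc_of_le h0x]; exact Icc_subset_Icc le_rfl hx.2
  have hPii : IntervalIntegrable (fun s => ∫ σ in (0:ℝ)..s, ρ σ * h σ) volume 0 x :=
    (hPcont.mono hsub).intervalIntegrable
  calc |∫ s in (0:ℝ)..x, ∫ σ in (0:ℝ)..s, ρ σ * h σ|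
      ≤ ∫ s in (0:ℝ)..x, |∫ σ in (0:ℝ)..s, ρ σ * h σ| :=
        intervalIntegral.abs_integral_le_integral_abs h0x
    _ ≤ ∫ s in (0:ℝ)..x, M * K * s ^ n := by
        apply intervalIntegral.integral_mono_on h0x hPii.abs
        · exact (Continuous.intervalIntegrable (by continuity) 0 x)
        · intro s hs
          have := aux_single ρ h hρ hh K hK n hb ⟨hs.1, hs.2.trans hx.2⟩
          calc |∫ σ in (0:ℝ)..s, ρ σ * h σ| ≤ M * (K * s ^ n) := this
            _ = M * K * s ^ n := by ring
    _ = M * K * (x ^ (n+1) / (n+1)) := by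
        rw [intervalIntegral.integral_const_mul, integral_pow]
        norm_num
    _ = M * K * x ^ (n+1) / (n+1) := by ring

lemma aux_double_congr (ρ h₁ h₂ : ℝ → ℝ)
    (hcongr : ∀ σ ∈ Icc (0:ℝ) 1, h₁ σ = h₂ σ) {x : ℝ} (hx : x ∈ Icc (0:ℝ) 1) :
    ∫ s in (0:ℝ)..x, ∫ σ in (0:ℝ)..s, ρ σ * h₁ σ
      = ∫ s in (0:ℝ)..x, ∫ σ in (0:ℝ)..s, ρ σ * h₂ σ := by
  have hsub : uIcc (0:ℝ) x ⊆ Icc 0 1 := by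
    rw [uIcc_of_le hx.1]; exact Icc_subset_Icc le_rfl hx.2
  apply intervalIntegral.integral_congr
  intro s hs
  apply intervalIntegral.integral_congr
  intro σ hσ
  show ρ σ * h₁ σ = ρ σ * h₂ σ
  have hσ' : σ ∈ Icc (0:ℝ) 1 := by
    have hs' := hsub hs
    have : uIcc (0:ℝ) s ⊆ Icc 0 1 := by
      rw [uIcc_of_le hs'.1]; exact Icc_subset_Icc le_rfl hs'.2
    exact this hσ
  rw [hcongr σ hσ']

lemma aux_double_const (ρ h : ℝ → ℝ) (c : ℝ) (x : ℝ) :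
    ∫ s in (0:ℝ)..x, ∫ σ in (0:ℝ)..s, ρ σ * (c * h σ)
      = c * ∫ s in (0:ℝ)..x, ∫ σ in (0:ℝ)..s, ρ σ * h σ := by
  have h1 : ∀ s : ℝ, ∫ σ in (0:ℝ)..s, ρ σ * (c * h σ)
      = c * ∫ σ in (0:ℝ)..s, ρ σ * h σ := by
    intro s
    rw [← intervalIntegral.integral_const_mul]
    exact intervalIntegral.integral_congr fun σ _ => by ring
  rw [intervalIntegral.integral_congr (g := fun s => c * ∫ σ in (0:ℝ)..s, ρ σ * h σ)
    (fun s _ => h1 s), intervalIntegral.integral_const_mul]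

lemma aux_double_sub (ρ h₁ h₂ : ℝ → ℝ) (hρ : IntegrableOn ρ (Ioc (0:ℝ) 1) volume)
    (hc1 : ContinuousOn h₁ (Icc (0:ℝ) 1)) (hc2 : ContinuousOn h₂ (Icc (0:ℝ) 1))
    {x : ℝ} (hx : x ∈ Icc (0:ℝ) 1) :
    ∫ s in (0:ℝ)..x, ∫ σ in (0:ℝ)..s, ρ σ * (h₁ σ - h₂ σ)
      = (∫ s in (0:ℝ)..x, ∫ σ in (0:ℝ)..s, ρ σ * h₁ σ)
        - ∫ s in (0:ℝ)..x, ∫ σ in (0:ℝ)..s, ρ σ * h₂ σ := by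
  have hsub : uIcc (0:ℝ) x ⊆ Icc 0 1 := by
    rw [uIcc_of_le hx.1]; exact Icc_subset_Icc le_rfl hx.2
  have h1 : ∀ s ∈ Icc (0:ℝ) 1, ∫ σ in (0:ℝ)..s, ρ σ * (h₁ σ - h₂ σ)
      = (∫ σ in (0:ℝ)..s, ρ σ * h₁ σ) - ∫ σ in (0:ℝ)..s, ρ σ * h₂ σ := by
    intro s hs
    rw [← intervalIntegral.integral_sub (aux_mul_int ρ h₁ hρ hc1 hs)
      (aux_mul_int ρ h₂ hρ hc2 hs)]
    exact intervalIntegral.integral_congr fun σ _ => by ring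
  have hPint1 : IntegrableOn (fun σ => ρ σ * h₁ σ) (Ioc (0:ℝ) 1) volume := by
    have := aux_mul_int ρ h₁ hρ hc1 (x := 1) ⟨zero_le_one, le_rfl⟩
    rwa [intervalIntegrable_iff_integrableOn_Ioc_of_le zero_le_one] at this
  have hPint2 : IntegrableOn (fun σ => ρ σ * h₂ σ) (Ioc (0:ℝ) 1) volume := by
    have := aux_mul_int ρ h₂ hρ hc2 (x := 1) ⟨zero_le_one, le_rfl⟩
    rwa [intervalIntegrable_iff_integrableOn_Ioc_of_le zero_le_one] at this
  rw [intervalIntegral.integral_congr (g := fun s =>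
      (∫ σ in (0:ℝ)..s, ρ σ * h₁ σ) - ∫ σ in (0:ℝ)..s, ρ σ * h₂ σ)
      (fun s hs => h1 s (hsub hs))]
  exact intervalIntegral.integral_sub
    (((aux_prim_cont _ hPint1).mono hsub).intervalIntegrable)
    (((aux_prim_cont _ hPint2).mono hsub).intervalIntegrable)

lemma aux_eLpNorm_le (p : ENNReal) (f : ℝ → ℝ) (C : ℝ)
    (hb : ∀ x ∈ Ioo (0:ℝ) 1, |f x| ≤ C) :
    eLpNorm f p (volume.restrict (Ioo (0:ℝ) 1)) ≤ ENNReal.ofReal C := by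
  have h := eLpNorm_le_of_ae_bound (μ := volume.restrict (Ioo (0:ℝ) 1)) (p := p) (f := f)
    ((ae_restrict_iff' measurableSet_Ioo).2 (ae_of_all _ fun x hx => by
      rw [Real.norm_eq_abs]; exact hb x hx))
  simpa [Measure.restrict_apply_univ, Real.volume_Ioo, ENNReal.one_rpow] using h

theorem stmt_12 (p : ENNReal) (hp : 1 < p) (ρ : ℝ → ℝ)
    (hρ : MemLp ρ p (volume.restrict (Ioo (0:ℝ) 1)))
    (hρpos : ∀ᵐ x ∂(volume.restrict (Ioo (0:ℝ) 1)), 0 < ρ x)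
    (α₀ β₀ : ℝ) (h0 : (α₀, β₀) ≠ (0, 0))
    (g g' g'' : ℕ → ℝ → ℝ)
    (hg0 : ∀ x : ℝ, g 0 x = (α₀ ^ 2 + β₀ ^ 2)⁻¹ * (β₀ - α₀ * x))
    (hg0' : ∀ x : ℝ, g' 0 x = (α₀ ^ 2 + β₀ ^ 2)⁻¹ * (-α₀))
    (hg0'' : ∀ x : ℝ, g'' 0 x = 0)
    (hgS : ∀ i : ℕ, ∀ x ∈ Icc (0:ℝ) 1,
      g (i + 1) x = ∫ s in (0:ℝ)..x, ∫ σ in (0:ℝ)..s, ρ σ * g i σ)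
    (hgS' : ∀ i : ℕ, ∀ x ∈ Icc (0:ℝ) 1,
      g' (i + 1) x = ∫ σ in (0:ℝ)..x, ρ σ * g i σ)
    (hgS'' : ∀ i : ℕ, ∀ x ∈ Icc (0:ℝ) 1, g'' (i + 1) x = ρ x * g i x)
    (lam ζ : ℝ) (e e' : ℝ → ℝ)
    (he : ∀ x ∈ Icc (0:ℝ) 1, e x = e 0 + ∫ t in (0:ℝ)..x, e' t)
    (he' : ∀ x ∈ Icc (0:ℝ) 1, e' x = e' 0 + ∫ t in (0:ℝ)..x, -(lam * ρ t * e t))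
    (heLp : MemLp (fun x => lam * ρ x * e x) p (volume.restrict (Ioo (0:ℝ) 1)))
    (hbc : α₀ * e 0 + β₀ * e' 0 = 0)
    (hζ : ζ = β₀ * e 0 - α₀ * e' 0) :
    (∑' i : ℕ, ENNReal.ofReal (|lam| ^ i)
        * (eLpNorm (g i) p (volume.restrict (Ioo (0:ℝ) 1))
            + eLpNorm (g' i) p (volume.restrict (Ioo (0:ℝ) 1))
            + eLpNorm (g'' i) p (volume.restrict (Ioo (0:ℝ) 1)))) < ⊤ ∧
    ∀ x ∈ Icc (0:ℝ) 1,
      Summable (fun i : ℕ => (-lam) ^ i * g i x) ∧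
      e x = ζ * ∑' i : ℕ, (-lam) ^ i * g i x := by
  haveI : IsFiniteMeasure (volume.restrict (Ioo (0:ℝ) 1)) :=
    ⟨by simp [Real.volume_Ioo]⟩
  have hp1 : (1:ENNReal) ≤ p := hp.le
  have hρint : IntegrableOn ρ (Ioc (0:ℝ) 1) volume := by
    rw [integrableOn_Ioc_iff_integrableOn_Ioo]
    exact hρ.integrable hp1
  have hM0 : 0 ≤ ∫ t in (0:ℝ)..1, |ρ t| :=
    intervalIntegral.integral_nonneg zero_le_one fun t _ => abs_nonneg _
  set M := ∫ t in (0:ℝ)..1, |ρ t| with hMdef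
  have hA : (0:ℝ) < α₀^2 + β₀^2 := by
    have hor : α₀ ≠ 0 ∨ β₀ ≠ 0 := by
      by_contra hc; push_neg at hc; exact h0 (by rw [hc.1, hc.2])
    rcases hor with h | h
    · have : 0 < α₀^2 := by positivity
      nlinarith [sq_nonneg β₀]
    · have : 0 < β₀^2 := by positivity
      nlinarith [sq_nonneg α₀]
  set C₀ := (α₀^2 + β₀^2)⁻¹ * (|α₀| + |β₀|) with hC₀def
  have hC₀ : 0 ≤ C₀ := by positivity
  -- main induction for g
  have key : ∀ i, ContinuousOn (g i) (Icc (0:ℝ) 1) ∧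
      ∀ x ∈ Icc (0:ℝ) 1, |g i x| ≤ (C₀ * M ^ i / (Nat.factorial i)) * x ^ i := by
    intro i
    induction i with
    | zero =>
      constructor
      · have hge : g 0 = fun x => (α₀^2+β₀^2)⁻¹ * (β₀ - α₀*x) := funext hg0
        rw [hge]
        exact Continuous.continuousOn (by fun_prop)
      · intro x hx
        rw [hg0 x]
        simp only [pow_zero, Nat.factorial_zero, Nat.cast_one, mul_one, div_one]
        have h2 : |x| ≤ 1 := abs_le.2 ⟨by linarith [hx.1], hx.2⟩
        have h1 : |β₀ - α₀ * x| ≤ |β₀| + |α₀| * |x| :=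
          (abs_sub _ _).trans_eq (by rw [abs_mul])
        have h3 : |(α₀^2+β₀^2)⁻¹ * (β₀ - α₀*x)| = (α₀^2+β₀^2)⁻¹ * |β₀ - α₀*x| := by
          rw [abs_mul, abs_of_nonneg (by positivity : (0:ℝ) ≤ (α₀^2+β₀^2)⁻¹)]
        rw [h3, hC₀def]
        have h4 : (0:ℝ) ≤ (α₀^2+β₀^2)⁻¹ := by positivity
        have h5 : |β₀ - α₀*x| ≤ |α₀| + |β₀| := by nlinarith [abs_nonneg α₀, abs_nonneg β₀]
        exact mul_le_mul_of_nonneg_left h5 h4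
    | succ i ih =>
      have hK0 : 0 ≤ C₀ * M ^ i / (Nat.factorial i) := by positivity
      have hPint : IntegrableOn (fun σ => ρ σ * g i σ) (Ioc (0:ℝ) 1) volume := by
        have := aux_mul_int ρ (g i) hρint ih.1 (x := 1) ⟨zero_le_one, le_rfl⟩
        rwa [intervalIntegrable_iff_integrableOn_Ioc_of_le zero_le_one] at this
      have hPcont : ContinuousOn (fun s => ∫ σ in (0:ℝ)..s, ρ σ * g i σ) (Icc (0:ℝ) 1) :=
        aux_prim_cont _ hPint
      constructor
      · have houter : ContinuousOn
            (fun x => ∫ s in (0:ℝ)..x, ∫ σ in (0:ℝ)..s, ρ σ * g i σ) (Icc (0:ℝ) 1) :=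
          aux_prim_cont _ ((hPcont.integrableOn_Icc).mono_set Ioc_subset_Icc_self)
        exact houter.congr fun x hx => hgS i x hx
      · intro x hx
        rw [hgS i x hx]
        have hdb := aux_double ρ (g i) hρint ih.1 _ hK0 i ih.2 hx
        rw [← hMdef] at hdb
        calc |∫ s in (0:ℝ)..x, ∫ σ in (0:ℝ)..s, ρ σ * g i σ|
            ≤ M * (C₀ * M ^ i / (Nat.factorial i)) * x ^ (i+1) / (i+1) := hdb
          _ = (C₀ * M ^ (i+1) / (Nat.factorial (i+1))) * x ^ (i+1) := by
              rw [Nat.factorial_succ]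
              have h1 : (Nat.factorial i : ℝ) ≠ 0 := Nat.cast_ne_zero.2 (Nat.factorial_ne_zero i)
              have h2 : ((i:ℝ) + 1) ≠ 0 := by positivity
              push_cast
              field_simp
              ring
  have gbound : ∀ i, ∀ x ∈ Icc (0:ℝ) 1, |g i x| ≤ C₀ * M ^ i / (Nat.factorial i) := by
    intro i x hx
    have hK0 : 0 ≤ C₀ * M ^ i / (Nat.factorial i) := by positivity
    exact ((key i).2 x hx).trans (mul_le_of_le_one_right hK0 (pow_le_one₀ hx.1 hx.2))
  have hsum0 : Summable (fun i : ℕ => |lam| ^ i * (C₀ * M ^ i / (Nat.factorial i))) :=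
    ((Real.summable_pow_div_factorial (|lam| * M)).mul_left C₀).congr
      (fun i => by rw [mul_pow]; ring)
  have E1 : ∀ i, eLpNorm (g i) p (volume.restrict (Ioo (0:ℝ) 1))
      ≤ ENNReal.ofReal (C₀ * M ^ i / (Nat.factorial i)) := fun i =>
    aux_eLpNorm_le p _ _ (fun x hx => gbound i x (Ioo_subset_Icc_self hx))
  have E2 : eLpNorm (g' 0) p (volume.restrict (Ioo (0:ℝ) 1)) ≤ ENNReal.ofReal C₀ := by
    apply aux_eLpNorm_le
    intro x _
    rw [hg0' x, hC₀def, abs_mul, abs_neg,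
      abs_of_nonneg (by positivity : (0:ℝ) ≤ (α₀^2+β₀^2)⁻¹)]
    have h4 : (0:ℝ) ≤ (α₀^2+β₀^2)⁻¹ := by positivity
    nlinarith [abs_nonneg α₀, abs_nonneg β₀]
  have E2' : ∀ i, eLpNorm (g' (i+1)) p (volume.restrict (Ioo (0:ℝ) 1))
      ≤ ENNReal.ofReal (M * (C₀ * M ^ i / (Nat.factorial i))) := by
    intro i
    apply aux_eLpNorm_le
    intro x hx
    have hx' : x ∈ Icc (0:ℝ) 1 := Ioo_subset_Icc_self hx
    rw [hgS' i x hx']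
    have hK0 : 0 ≤ C₀ * M ^ i / (Nat.factorial i) := by positivity
    have hs := aux_single ρ (g i) hρint (key i).1 _ hK0 i (key i).2 hx'
    rw [← hMdef] at hs
    refine hs.trans ?_
    have h1 : (C₀ * M^i / (Nat.factorial i)) * x ^ i ≤ C₀ * M^i / (Nat.factorial i) :=
      mul_le_of_le_one_right hK0 (pow_le_one₀ hx'.1 hx'.2)
    exact mul_le_mul_of_nonneg_left h1 hM0
  have E3 : eLpNorm (g'' 0) p (volume.restrict (Ioo (0:ℝ) 1)) = 0 := by
    have hz : g'' 0 = fun _ => (0:ℝ) := funext hg0''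
    rw [hz]; exact eLpNorm_zero
  have E3' : ∀ i, eLpNorm (g'' (i+1)) p (volume.restrict (Ioo (0:ℝ) 1))
      ≤ ENNReal.ofReal (C₀ * M ^ i / (Nat.factorial i))
        * eLpNorm ρ p (volume.restrict (Ioo (0:ℝ) 1)) := by
    intro i
    have hK0 : 0 ≤ C₀ * M ^ i / (Nat.factorial i) := by positivity
    have hae : ∀ᵐ x ∂(volume.restrict (Ioo (0:ℝ) 1)),
        ‖g'' (i+1) x‖ ≤ ‖((C₀ * M ^ i / (Nat.factorial i)) • ρ) x‖ := by
      refine (ae_restrict_iff' measurableSet_Ioo).2 (ae_of_all _ fun x hx => ?_)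
      have hx' : x ∈ Icc (0:ℝ) 1 := Ioo_subset_Icc_self hx
      rw [hgS'' i x hx']
      simp only [Pi.smul_apply, smul_eq_mul, Real.norm_eq_abs, abs_mul,
        abs_of_nonneg hK0]
      rw [mul_comm (|ρ x|)]
      exact mul_le_mul_of_nonneg_right (gbound i x hx') (abs_nonneg _)
    calc eLpNorm (g'' (i+1)) p (volume.restrict (Ioo (0:ℝ) 1))
        ≤ eLpNorm ((C₀ * M ^ i / (Nat.factorial i)) • ρ) p (volume.restrict (Ioo (0:ℝ) 1)) :=
          eLpNorm_mono_ae hae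
      _ = ‖(C₀ * M ^ i / (Nat.factorial i))‖₊ * eLpNorm ρ p (volume.restrict (Ioo (0:ℝ) 1)) :=
          eLpNorm_const_smul _ _ _ _
      _ = ENNReal.ofReal (C₀ * M ^ i / (Nat.factorial i))
            * eLpNorm ρ p (volume.restrict (Ioo (0:ℝ) 1)) := by
          rw [← Real.enorm_eq_ofReal hK0]; rfl
  constructor
  · -- Part 1 : finiteness of the W^{2,p} series
    rw [tsum_eq_zero_add' ENNReal.summable]
    refine ENNReal.add_lt_top.2 ⟨?_, ?_⟩
    · refine ENNReal.mul_lt_top ENNReal.ofReal_lt_top ?_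
      refine ENNReal.add_lt_top.2 ⟨ENNReal.add_lt_top.2 ⟨?_, ?_⟩, ?_⟩
      · exact lt_of_le_of_lt (E1 0) ENNReal.ofReal_lt_top
      · exact lt_of_le_of_lt E2 ENNReal.ofReal_lt_top
      · rw [E3]; simp
    · have hterm : ∀ i : ℕ, ENNReal.ofReal (|lam| ^ (i+1))
          * (eLpNorm (g (i+1)) p (volume.restrict (Ioo (0:ℝ) 1))
              + eLpNorm (g' (i+1)) p (volume.restrict (Ioo (0:ℝ) 1))
              + eLpNorm (g'' (i+1)) p (volume.restrict (Ioo (0:ℝ) 1)))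
          ≤ ENNReal.ofReal (|lam| ^ (i+1) * (C₀ * M^(i+1)/(Nat.factorial (i+1))))
            + ENNReal.ofReal (|lam| ^ (i+1) * (M * (C₀ * M ^ i/(Nat.factorial i))))
            + ENNReal.ofReal (|lam| ^ (i+1) * (C₀ * M ^ i/(Nat.factorial i)))
              * eLpNorm ρ p (volume.restrict (Ioo (0:ℝ) 1)) := by
        intro i
        have hl : 0 ≤ |lam| ^ (i+1) := by positivity
        rw [mul_add, mul_add]
        refine add_le_add (add_le_add ?_ ?_) ?_
        · refine le_trans (mul_le_mul_right (E1 (i+1)) _) ?_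
          rw [← ENNReal.ofReal_mul hl]
        · refine le_trans (mul_le_mul_right (E2' i) _) ?_
          rw [← ENNReal.ofReal_mul hl]
        · refine le_trans (mul_le_mul_right (E3' i) _) ?_
          rw [← mul_assoc, ← ENNReal.ofReal_mul hl]
      refine lt_of_le_of_lt (ENNReal.tsum_le_tsum hterm) ?_
      rw [ENNReal.tsum_add, ENNReal.tsum_add, ENNReal.tsum_mul_right]
      have S1 : Summable (fun i : ℕ => |lam| ^ (i+1) * (C₀ * M ^ (i+1)/(Nat.factorial (i+1)))) :=
        (summable_nat_add_iff (f := fun i : ℕ => |lam| ^ i * (C₀ * M ^ i / (Nat.factorial i))) 1).2 hsum0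
      have S2 : Summable (fun i : ℕ => |lam| ^ (i+1) * (M * (C₀ * M ^ i/(Nat.factorial i)))) :=
        (hsum0.mul_left (|lam| * M)).congr (fun i => by rw [pow_succ]; ring)
      have S3 : Summable (fun i : ℕ => |lam| ^ (i+1) * (C₀ * M ^ i/(Nat.factorial i))) :=
        (hsum0.mul_left (|lam|)).congr (fun i => by rw [pow_succ]; ring)
      have N1 : ∀ i : ℕ, 0 ≤ |lam| ^ (i+1) * (C₀ * M ^ (i+1)/(Nat.factorial (i+1))) :=
        fun i => by positivity
      have N2 : ∀ i : ℕ, 0 ≤ |lam| ^ (i+1) * (M * (C₀ * M ^ i/(Nat.factorial i))) :=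
        fun i => by positivity
      have N3 : ∀ i : ℕ, 0 ≤ |lam| ^ (i+1) * (C₀ * M ^ i/(Nat.factorial i)) :=
        fun i => by positivity
      rw [← ENNReal.ofReal_tsum_of_nonneg N1 S1, ← ENNReal.ofReal_tsum_of_nonneg N2 S2,
        ← ENNReal.ofReal_tsum_of_nonneg N3 S3]
      exact ENNReal.add_lt_top.2 ⟨ENNReal.add_lt_top.2
        ⟨ENNReal.ofReal_lt_top, ENNReal.ofReal_lt_top⟩,
        ENNReal.mul_lt_top ENNReal.ofReal_lt_top hρ.2⟩
  · -- Part 2 : pointwise expansion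
    have heint : IntegrableOn (fun t => -(lam * ρ t * e t)) (Ioc (0:ℝ) 1) volume := by
      have h1 : IntegrableOn (fun t => lam * ρ t * e t) (Ioc (0:ℝ) 1) volume := by
        rw [integrableOn_Ioc_iff_integrableOn_Ioo]
        exact heLp.integrable hp1
      exact h1.neg
    have he'cont : ContinuousOn e' (Icc (0:ℝ) 1) :=
      (continuousOn_const.add (aux_prim_cont _ heint)).congr (fun t ht => he' t ht)
    have hecont : ContinuousOn e (Icc (0:ℝ) 1) := by
      have h1 : IntegrableOn e' (Ioc (0:ℝ) 1) volume :=
        he'cont.integrableOn_Icc.mono_set Ioc_subset_Icc_self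
      exact (continuousOn_const.add (aux_prim_cont _ h1)).congr (fun y hy => he y hy)
    obtain ⟨E, hE⟩ := isCompact_Icc.exists_bound_of_continuousOn hecont
    have hE' : ∀ y ∈ Icc (0:ℝ) 1, |e y| ≤ E := fun y hy => by
      have := hE y hy; rwa [Real.norm_eq_abs] at this
    have hE0 : 0 ≤ E := (abs_nonneg (e 0)).trans (hE' 0 ⟨le_rfl, zero_le_one⟩)
    have hAne : (α₀^2 + β₀^2) ≠ 0 := ne_of_gt hA
    have he0 : e 0 = ζ * ((α₀^2 + β₀^2)⁻¹ * β₀) := by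
      rw [hζ]; field_simp; linear_combination α₀ * hbc
    have he'0 : e' 0 = ζ * ((α₀^2 + β₀^2)⁻¹ * (-α₀)) := by
      rw [hζ]; field_simp; linear_combination β₀ * hbc
    -- the basic integral identity for e
    have ea : ∀ y ∈ Icc (0:ℝ) 1,
        e y = ζ * g 0 y - lam * ∫ s in (0:ℝ)..y, ∫ σ in (0:ℝ)..s, ρ σ * e σ := by
      intro y hy
      have hsub : uIcc (0:ℝ) y ⊆ Icc 0 1 := by
        rw [uIcc_of_le hy.1]; exact Icc_subset_Icc le_rfl hy.2
      have hPcont := aux_prim_cont _ heint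
      have h1 : ∫ t in (0:ℝ)..y, e' t
          = ∫ t in (0:ℝ)..y, (e' 0 + ∫ u in (0:ℝ)..t, -(lam * ρ u * e u)) :=
        intervalIntegral.integral_congr (fun t ht => he' t (hsub ht))
      have h2 : ∫ t in (0:ℝ)..y, (e' 0 + ∫ u in (0:ℝ)..t, -(lam * ρ u * e u))
          = e' 0 * y + ∫ t in (0:ℝ)..y, ∫ u in (0:ℝ)..t, -(lam * ρ u * e u) := by
        rw [intervalIntegral.integral_add intervalIntegrable_const
          ((hPcont.mono hsub).intervalIntegrable)]
        simp [mul_comm]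
      have h3 : ∀ t : ℝ, (∫ u in (0:ℝ)..t, -(lam * ρ u * e u))
          = -lam * ∫ u in (0:ℝ)..t, ρ u * e u := by
        intro t
        rw [← intervalIntegral.integral_const_mul]
        exact intervalIntegral.integral_congr fun u _ => by ring
      have h4 : ∫ t in (0:ℝ)..y, ∫ u in (0:ℝ)..t, -(lam * ρ u * e u)
          = -lam * ∫ t in (0:ℝ)..y, ∫ u in (0:ℝ)..t, ρ u * e u := by
        rw [intervalIntegral.integral_congr
          (g := fun t => -lam * ∫ u in (0:ℝ)..t, ρ u * e u) (fun t _ => h3 t),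
          intervalIntegral.integral_const_mul]
      rw [he y hy, h1, h2, h4, hg0 y, he0, he'0]
      ring
    -- continuity of partial remainders
    have hScont : ∀ n, ContinuousOn
        (fun σ => e σ - ζ * ∑ i ∈ Finset.range n, (-lam) ^ i * g i σ) (Icc (0:ℝ) 1) := by
      intro n
      apply hecont.sub
      apply continuousOn_const.mul
      exact continuousOn_finset_sum _ (fun i _ => continuousOn_const.mul (key i).1)
    -- recursion for the remainders
    have hFrec : ∀ n, ∀ y ∈ Icc (0:ℝ) 1,
        e y - ζ * ∑ i ∈ Finset.range (n+1), (-lam) ^ i * g i y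
          = -lam * ∫ s in (0:ℝ)..y, ∫ σ in (0:ℝ)..s,
              ρ σ * (e σ - ζ * ∑ i ∈ Finset.range n, (-lam) ^ i * g i σ) := by
      intro n
      induction n with
      | zero =>
        intro y hy
        rw [aux_double_congr ρ _ e (fun σ _ => by simp) hy, Finset.sum_range_one]
        have := ea y hy
        simp only [pow_zero, one_mul]
        linarith
      | succ n ih =>
        intro y hy
        have hsplit : ∀ σ ∈ Icc (0:ℝ) 1,
            e σ - ζ * ∑ i ∈ Finset.range (n+1), (-lam) ^ i * g i σ
              = (e σ - ζ * ∑ i ∈ Finset.range n, (-lam) ^ i * g i σ)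
                - (ζ * (-lam) ^ n) * g n σ := fun σ _ => by
          rw [Finset.sum_range_succ]; ring
        rw [aux_double_congr ρ _ _ hsplit hy,
          aux_double_sub ρ _ (fun σ => ζ * (-lam) ^ n * g n σ) hρint (hScont n)
            (continuousOn_const.mul (key n).1) hy,
          aux_double_const ρ (g n) (ζ * (-lam) ^ n) y,
          ← hgS n y hy, mul_sub, ← ih y hy, Finset.sum_range_succ]
        ring
    -- remainder bound
    have hFb : ∀ n, ∀ y ∈ Icc (0:ℝ) 1,
        |e y - ζ * ∑ i ∈ Finset.range n, (-lam) ^ i * g i y|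
          ≤ (E * (|lam| * M) ^ n / (Nat.factorial n)) * y ^ n := by
      intro n
      induction n with
      | zero =>
        intro y hy
        simp only [Finset.range_zero, Finset.sum_empty, mul_zero, sub_zero, pow_zero,
          Nat.factorial_zero, Nat.cast_one, div_one, mul_one]
        exact hE' y hy
      | succ n ih =>
        intro y hy
        rw [hFrec n y hy, abs_mul, abs_neg]
        have hK0 : 0 ≤ E * (|lam| * M) ^ n / (Nat.factorial n) := by positivity
        have hdb := aux_double ρ _ hρint (hScont n) _ hK0 n ih hy
        rw [← hMdef] at hdb
        calc |lam| * |∫ s in (0:ℝ)..y, ∫ σ in (0:ℝ)..s,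
              ρ σ * (e σ - ζ * ∑ i ∈ Finset.range n, (-lam) ^ i * g i σ)|
            ≤ |lam| * (M * (E * (|lam| * M) ^ n / (Nat.factorial n)) * y ^ (n+1) / (n+1)) :=
              mul_le_mul_of_nonneg_left hdb (abs_nonneg _)
          _ = (E * (|lam| * M) ^ (n+1) / (Nat.factorial (n+1))) * y ^ (n+1) := by
              rw [Nat.factorial_succ]
              have h1 : (Nat.factorial n : ℝ) ≠ 0 := Nat.cast_ne_zero.2 (Nat.factorial_ne_zero n)
              have h2 : ((n:ℝ) + 1) ≠ 0 := by positivity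
              push_cast
              field_simp
              ring
    -- conclusion
    intro x hx
    have hsummx : Summable (fun i : ℕ => (-lam) ^ i * g i x) := by
      apply Summable.of_norm_bounded hsum0
      intro i
      rw [Real.norm_eq_abs, abs_mul, abs_pow, abs_neg]
      exact mul_le_mul_of_nonneg_left (gbound i x hx) (by positivity)
    refine ⟨hsummx, ?_⟩
    have hlim0 : Tendsto
        (fun n => e x - ζ * ∑ i ∈ Finset.range n, (-lam) ^ i * g i x) atTop (𝓝 0) := by
      apply squeeze_zero_norm
        (a := fun n => E * ((|lam| * M) ^ n / (Nat.factorial n)))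
      · intro n
        rw [Real.norm_eq_abs]
        refine (hFb n x hx).trans ?_
        have hK0 : 0 ≤ E * (|lam| * M) ^ n / (Nat.factorial n) := by positivity
        calc (E * (|lam| * M) ^ n / (Nat.factorial n)) * x ^ n
            ≤ E * (|lam| * M) ^ n / (Nat.factorial n) :=
              mul_le_of_le_one_right hK0 (pow_le_one₀ hx.1 hx.2)
          _ = E * ((|lam| * M) ^ n / (Nat.factorial n)) := by ring
      · simpa using (FloorSemiring.tendsto_pow_div_factorial_atTop (|lam| * M)).const_mul E
    have hlim1 : Tendsto
        (fun n => ζ * ∑ i ∈ Finset.range n, (-lam) ^ i * g i x) atTop (𝓝 (e x)) := by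
      have h1 : Tendsto
          (fun n => e x - (e x - ζ * ∑ i ∈ Finset.range n, (-lam) ^ i * g i x))
          atTop (𝓝 (e x - 0)) := tendsto_const_nhds.sub hlim0
      simpa using h1
    have hlim2 : Tendsto
        (fun n => ζ * ∑ i ∈ Finset.range n, (-lam) ^ i * g i x) atTop
        (𝓝 (ζ * ∑' i : ℕ, (-lam) ^ i * g i x)) := by
      have h2 := (hsummx.hasSum.mul_left ζ).tendsto_sum_nat
      refine h2.congr fun n => ?_
      rw [Finset.mul_sum]
    exact tendsto_nhds_unique hlim1 hlim2
end

section
/- Let p ∈ (1,∞], let ρ ∈ L^p(0,1) satisfy ρ(x) > 0 for a.e. x ∈ (0,1), and let (α₀,β₀), (α₁,β₁) ∈ ℝ² ∖ {(0,0)}. Then there exists a constant C > 0 such that: for every λ ≥ 1 and every e ∈ W^{2,p}(0,1) with ∫₀¹ e(x)² ρ(x) dx = 1, −e''(x) = λ ρ(x) e(x) a.e. on (0,1), α₀ e(0) + β₀ e'(0) = 0 and α₁ e(1) + β₁ e'(1) = 0, one has |β₀ e(0) − α₀ e'(0)| ≤ C (1 + λ^{3/2}). -/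
open MeasureTheory Set Filter Topology

lemma aux_setIntegral_pos {ρ : ℝ → ℝ} {s : Set ℝ} (hs : MeasurableSet s)
    (hμ : volume s ≠ 0) (hpos : ∀ᵐ x ∂volume.restrict s, 0 < ρ x)
    (hint : IntegrableOn ρ s volume) : 0 < ∫ x in s, ρ x := by
  rw [setIntegral_pos_iff_support_of_nonneg_ae (hpos.mono fun x h => h.le) hint]
  have h0 : volume ({x | ¬ 0 < ρ x} ∩ s) = 0 := by
    rw [← Measure.restrict_apply' hs]; exact hpos
  have hsub : s \ (Function.support ρ ∩ s) ⊆ {x | ¬ 0 < ρ x} ∩ s := by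
    intro x hx
    rcases hx with ⟨hxs, hxn⟩
    refine ⟨fun hpos' => hxn ⟨fun h0' => absurd h0' (by positivity), hxs⟩, hxs⟩
  by_contra hcon
  push_neg at hcon
  have hc0 : volume (Function.support ρ ∩ s) = 0 := le_antisymm hcon (zero_le)
  have hd0 : volume (s \ (Function.support ρ ∩ s)) = 0 := measure_mono_null hsub h0
  have h2 : volume s ≤ volume (Function.support ρ ∩ s) + volume (s \ (Function.support ρ ∩ s)) := by
    refine (measure_mono ?_).trans (measure_union_le _ _)
    intro x hx
    by_cases h : x ∈ Function.support ρ ∩ s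
    · exact Or.inl h
    · exact Or.inr ⟨hx, h⟩
  rw [hc0, hd0, add_zero] at h2
  exact hμ (le_antisymm h2 (zero_le))

set_option maxHeartbeats 2000000 in
theorem stmt_13 (p : ENNReal) (hp : 1 < p) (ρ : ℝ → ℝ)
    (hρ : MemLp ρ p (volume.restrict (Ioo (0:ℝ) 1)))
    (hρpos : ∀ᵐ x ∂(volume.restrict (Ioo (0:ℝ) 1)), 0 < ρ x)
    (α₀ β₀ α₁ β₁ : ℝ) (h0 : (α₀, β₀) ≠ (0, 0)) (h1 : (α₁, β₁) ≠ (0, 0)) :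
    ∃ C : ℝ, 0 < C ∧
      ∀ lam : ℝ, 1 ≤ lam →
        ∀ e e' : ℝ → ℝ,
          (∀ x ∈ Icc (0:ℝ) 1, e x = e 0 + ∫ t in (0:ℝ)..x, e' t) →
          (∀ x ∈ Icc (0:ℝ) 1, e' x = e' 0 + ∫ t in (0:ℝ)..x, -(lam * ρ t * e t)) →
          MemLp (fun x => lam * ρ x * e x) p (volume.restrict (Ioo (0:ℝ) 1)) →
          (∫ x in Ioo (0:ℝ) 1, (e x) ^ 2 * ρ x) = 1 →
          α₀ * e 0 + β₀ * e' 0 = 0 →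
          α₁ * e 1 + β₁ * e' 1 = 0 →
          |β₀ * e 0 - α₀ * e' 0| ≤ C * (1 + lam ^ ((3:ℝ) / 2)) := by
  classical
  have hp1 : (1:ENNReal) ≤ p := hp.le
  haveI : IsFiniteMeasure (volume.restrict (Ioo (0:ℝ) 1)) := by
    constructor
    rw [Measure.restrict_apply_univ, Real.volume_Ioo]
    exact ENNReal.ofReal_lt_top
  have hρint : IntegrableOn ρ (Ioo (0:ℝ) 1) volume := hρ.integrable hp1
  have hρnn : 0 ≤ᵐ[volume.restrict (Ioo (0:ℝ) 1)] ρ := hρpos.mono fun x h => h.le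
  set c₀ : ℝ := |α₀| / |β₀| with hc₀def
  set c₁ : ℝ := |α₁| / |β₁| with hc₁def
  have hc₀ : 0 ≤ c₀ := div_nonneg (abs_nonneg _) (abs_nonneg _)
  have hc₁ : 0 ≤ c₁ := div_nonneg (abs_nonneg _) (abs_nonneg _)
  set θ : ℝ := 1 / (8 * (c₀ + c₁ + 1)) with hθdef
  have hθpos : 0 < θ := by positivity
  have hθ8 : θ ≤ 1 / 8 := by
    rw [hθdef]
    rw [div_le_div_iff₀ (by positivity) (by norm_num)]
    nlinarith
  have hθc : (c₀ + c₁) * θ ≤ 1 / 8 := by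
    rw [hθdef, mul_one_div, div_le_div_iff₀ (by positivity) (by norm_num)]
    nlinarith
  set ℓ₀ : ℝ := θ / 4 with hℓdef
  have hℓpos : 0 < ℓ₀ := by positivity
  have hℓ1 : ℓ₀ ≤ 1 / 32 := by rw [hℓdef]; linarith
  have hsub0 : Ioo (0:ℝ) ℓ₀ ⊆ Ioo (0:ℝ) 1 := Ioo_subset_Ioo_right (by linarith)
  have hsub1 : Ioo (1 - ℓ₀) 1 ⊆ Ioo (0:ℝ) 1 := Ioo_subset_Ioo_left (by linarith)
  set φ₀ : ℝ := ∫ x in Ioo (0:ℝ) ℓ₀, ρ x with hφ₀def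
  set φ₁ : ℝ := ∫ x in Ioo (1 - ℓ₀) 1, ρ x with hφ₁def
  have hφ₀pos : 0 < φ₀ := by
    refine aux_setIntegral_pos measurableSet_Ioo ?_ ?_ (hρint.mono_set hsub0)
    · rw [Real.volume_Ioo]
      simp only [ne_eq, ENNReal.ofReal_eq_zero, not_le]
      linarith
    · exact ae_restrict_of_ae_restrict_of_subset hsub0 hρpos
  have hφ₁pos : 0 < φ₁ := by
    refine aux_setIntegral_pos measurableSet_Ioo ?_ ?_ (hρint.mono_set hsub1)
    · rw [Real.volume_Ioo]
      simp only [ne_eq, ENNReal.ofReal_eq_zero, not_le]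
      linarith
    · exact ae_restrict_of_ae_restrict_of_subset hsub1 hρpos
  set Q₀ : ℝ := 16 / φ₀ with hQ₀def
  set Q₁ : ℝ := 16 / φ₁ with hQ₁def
  have hQ₀pos : 0 < Q₀ := by positivity
  have hQ₁pos : 0 < Q₁ := by positivity
  set C₄ : ℝ := c₀ * Q₀ + c₁ * Q₁ with hC₄def
  have hC₄ : 0 ≤ C₄ := by positivity
  set D₁ : ℝ := 2 + 2 * C₄ with hD₁def
  have hD₁ : 2 ≤ D₁ := by linarith
  set R : ℝ := ∫ x in Ioo (0:ℝ) 1, ρ x with hRdef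
  have hR0 : 0 ≤ R := integral_nonneg_of_ae hρnn
  set K₀ : ℝ := (α₀ ^ 2 + β₀ ^ 2) / |β₀| with hK₀def
  have hK₀ : 0 ≤ K₀ := by positivity
  set CA : ℝ := K₀ * (1 + θ * D₁ + Q₀) / 2 with hCAdef
  have hCA : 0 ≤ CA := by positivity
  set CB : ℝ := |α₀| * ((D₁ + 2) / 2 + R * Real.sqrt (D₁ + 1)) with hCBdef
  have hCB : 0 ≤ CB := by positivity
  refine ⟨1 + CA + CB, by linarith, ?_⟩
  intro lam hlam e e' he he' hMem hnorm hbc0 hbc1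
  clear_value c₀ c₁ θ ℓ₀ φ₀ φ₁ Q₀ Q₁ C₄ D₁ R K₀ CA CB
  set g : ℝ → ℝ := fun t => -(lam * ρ t * e t) with hgdef
  have hgIntIoo : IntegrableOn g (Ioo (0:ℝ) 1) volume := (hMem.integrable hp1).neg
  have hgIntIcc : IntegrableOn g (Icc (0:ℝ) 1) volume :=
    hgIntIoo.congr_set_ae Ioo_ae_eq_Icc.symm
  have huIcc : uIcc (0:ℝ) 1 = Icc (0:ℝ) 1 := uIcc_of_le (by norm_num)
  have hgII : ∀ a b : ℝ, a ∈ Icc (0:ℝ) 1 → b ∈ Icc (0:ℝ) 1 → IntervalIntegrable g volume a b :=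
    fun a b ha hb => (hgIntIcc.mono_set (uIcc_subset_Icc ha hb)).intervalIntegrable
  have he'c : ContinuousOn e' (Icc (0:ℝ) 1) := by
    have hcont := intervalIntegral.continuousOn_primitive_interval
      (μ := volume) (a := (0:ℝ)) (b := 1) (f := g) (by rw [huIcc]; exact hgIntIcc)
    rw [huIcc] at hcont
    exact ContinuousOn.congr (continuousOn_const.add hcont) (fun x hx => he' x hx)
  have he'II : ∀ a b : ℝ, a ∈ Icc (0:ℝ) 1 → b ∈ Icc (0:ℝ) 1 → IntervalIntegrable e' volume a b :=
    fun a b ha hb => ((he'c.mono (uIcc_subset_Icc ha hb)).intervalIntegrable)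
  have he'IntIcc : IntegrableOn e' (Icc (0:ℝ) 1) volume := he'c.integrableOn_compact isCompact_Icc
  have hec : ContinuousOn e (Icc (0:ℝ) 1) := by
    have hcont := intervalIntegral.continuousOn_primitive_interval
      (μ := volume) (a := (0:ℝ)) (b := 1) (f := e') (by rw [huIcc]; exact he'IntIcc)
    rw [huIcc] at hcont
    exact ContinuousOn.congr (continuousOn_const.add hcont) (fun x hx => he x hx)
  obtain ⟨xM, hxM, hmax⟩ := isCompact_Icc.exists_isMaxOn (nonempty_Icc.2 (by norm_num))
    (hec.abs : ContinuousOn (fun x => |e x|) (Icc (0:ℝ) 1))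
  set M : ℝ := |e xM| with hMdef
  have hM : ∀ x ∈ Icc (0:ℝ) 1, |e x| ≤ M := hmax
  have hM0 : 0 ≤ M := abs_nonneg _
  have heAESM : AEStronglyMeasurable e (volume.restrict (Ioo (0:ℝ) 1)) :=
    (hec.mono Ioo_subset_Icc_self).aestronglyMeasurable measurableSet_Ioo
  have he'AESM : AEStronglyMeasurable e' (volume.restrict (Ioo (0:ℝ) 1)) :=
    (he'c.mono Ioo_subset_Icc_self).aestronglyMeasurable measurableSet_Ioo
  have he'IntIoo : IntegrableOn e' (Ioo (0:ℝ) 1) volume := he'IntIcc.mono_set Ioo_subset_Icc_self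
  have he'sqIntIoo : IntegrableOn (fun x => e' x ^ 2) (Ioo (0:ℝ) 1) volume :=
    ((he'c.pow 2).integrableOn_compact isCompact_Icc).mono_set Ioo_subset_Icc_self
  set E : ℝ := ∫ x in Ioo (0:ℝ) 1, e' x ^ 2 with hEdef
  have hE0 : 0 ≤ E := setIntegral_nonneg measurableSet_Ioo (fun x _ => sq_nonneg _)
  have hnormInt : IntegrableOn (fun x => e x ^ 2 * ρ x) (Ioo (0:ℝ) 1) volume := by
    refine Integrable.mono' (hρint.const_mul (M ^ 2)) ((heAESM.pow 2).mul hρ.aestronglyMeasurable) ?_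
    filter_upwards [hρnn, ae_restrict_mem measurableSet_Ioo] with x h1 h2
    have hxM' := hM x (Ioo_subset_Icc_self h2)
    rw [Real.norm_eq_abs, abs_mul, abs_of_nonneg h1, abs_pow, sq_abs]
    have : e x ^ 2 ≤ M ^ 2 := by rw [← sq_abs]; exact pow_le_pow_left₀ (abs_nonneg _) hxM' 2
    exact mul_le_mul_of_nonneg_right this h1
  have h0I : (0:ℝ) ∈ Icc (0:ℝ) 1 := by norm_num
  have h1I : (1:ℝ) ∈ Icc (0:ℝ) 1 := by norm_num
  have heab : ∀ a b : ℝ, a ∈ Icc (0:ℝ) 1 → b ∈ Icc (0:ℝ) 1 →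
      e b - e a = ∫ t in a..b, e' t := by
    intro a b ha hb
    have h3 := intervalIntegral.integral_interval_sub_left (he'II 0 b h0I hb) (he'II 0 a h0I ha)
    rw [he a ha, he b hb, ← h3]
    ring
  have hsqle : ∀ a b : ℝ, 0 ≤ a → a ≤ b → b ≤ 1 → (∫ t in a..b, e' t ^ 2) ≤ E := by
    intro a b ha hab hb1
    rw [intervalIntegral.integral_of_le hab]
    refine setIntegral_mono_set he'sqIntIoo (Eventually.of_forall fun x => sq_nonneg _) ?_
    rw [ae_le_set]
    refine measure_mono_null ?_ (measure_singleton (1:ℝ))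
    intro x hx
    simp only [mem_diff, mem_Ioc, mem_Ioo, not_and, not_lt] at hx
    have hx1 : x = 1 := le_antisymm (hx.1.2.trans hb1) (hx.2 (by linarith [hx.1.1]))
    simp [hx1]
  have key : ∀ s : ℝ, 0 < s → ∀ a b : ℝ, 0 ≤ a → a ≤ b → b ≤ 1 →
      (∫ t in a..b, |e' t|) ≤ ((b - a) * s + E / s) / 2 := by
    intro s hs a b ha hab hb1
    have haI : a ∈ Icc (0:ℝ) 1 := ⟨ha, hab.trans hb1⟩
    have hbI : b ∈ Icc (0:ℝ) 1 := ⟨ha.trans hab, hb1⟩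
    have habs_int : IntervalIntegrable (fun t => |e' t|) volume a b :=
      ((he'c.mono (uIcc_subset_Icc haI hbI)).abs).intervalIntegrable
    have hsq_int : IntervalIntegrable (fun t => e' t ^ 2) volume a b :=
      ((he'c.pow 2).mono (uIcc_subset_Icc haI hbI)).intervalIntegrable
    have hpt : ∀ t ∈ Icc a b, |e' t| ≤ s / 2 + e' t ^ 2 * (1 / (2 * s)) := by
      intro t _
      have h1 : 2 * s * |e' t| ≤ s ^ 2 + e' t ^ 2 := by
        have hexp : (s - |e' t|) ^ 2 = s ^ 2 - 2 * (s * |e' t|) + |e' t| ^ 2 := by ring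
        linarith only [sq_nonneg (s - |e' t|), hexp, sq_abs (e' t)]
      have h2s : (0:ℝ) < 2 * s := by linarith
      rw [← sub_nonneg]
      have hid : s / 2 + e' t ^ 2 * (1 / (2 * s)) - |e' t|
          = (s ^ 2 + e' t ^ 2 - 2 * s * |e' t|) / (2 * s) := by
        field_simp
      rw [hid]
      apply div_nonneg _ h2s.le
      linarith only [h1]
    calc (∫ t in a..b, |e' t|) ≤ ∫ t in a..b, (s / 2 + e' t ^ 2 * (1 / (2 * s))) :=
          intervalIntegral.integral_mono_on hab habs_int
            (intervalIntegrable_const.add (hsq_int.mul_const _)) hpt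
      _ = (b - a) * (s / 2) + (∫ t in a..b, e' t ^ 2) * (1 / (2 * s)) := by
          rw [intervalIntegral.integral_add intervalIntegrable_const (hsq_int.mul_const _),
            intervalIntegral.integral_const, intervalIntegral.integral_mul_const, smul_eq_mul]
      _ ≤ (b - a) * (s / 2) + E * (1 / (2 * s)) := by
          have h5 := hsqle a b ha hab hb1
          have h6 : (0:ℝ) ≤ 1 / (2 * s) := by positivity
          exact add_le_add le_rfl (mul_le_mul_of_nonneg_right h5 h6)
      _ = ((b - a) * s + E / s) / 2 := by
          field_simp
  have hsqrtE : 0 < Real.sqrt (E + 1) := Real.sqrt_pos.2 (by linarith)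
  have hEs : E / Real.sqrt (E + 1) ≤ Real.sqrt (E + 1) := by
    rw [div_le_iff₀ hsqrtE, Real.mul_self_sqrt (by linarith : (0:ℝ) ≤ E + 1)]
    linarith
  have hM2 : ∀ x ∈ Icc (0:ℝ) 1, |e x| ≤ |e 0| + Real.sqrt (E + 1) := by
    intro x hx
    have h1 : e x - e 0 = ∫ t in (0:ℝ)..x, e' t := heab 0 x h0I hx
    have h2 := key (Real.sqrt (E + 1)) hsqrtE 0 x le_rfl hx.1 hx.2
    have h3 : |∫ t in (0:ℝ)..x, e' t| ≤ ∫ t in (0:ℝ)..x, |e' t| :=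
      intervalIntegral.abs_integral_le_integral_abs hx.1
    have h5 : |e x - e 0| ≤ Real.sqrt (E + 1) := by
      rw [h1]
      refine h3.trans (h2.trans ?_)
      have h7 : (x - 0) * Real.sqrt (E + 1) ≤ 1 * Real.sqrt (E + 1) :=
        mul_le_mul_of_nonneg_right (by linarith only [hx.2]) hsqrtE.le
      linarith only [h7, hEs]
    calc |e x| = |e 0 + (e x - e 0)| := by ring_nf
      _ ≤ |e 0| + |e x - e 0| := abs_add_le _ _
      _ ≤ |e 0| + Real.sqrt (E + 1) := by linarith
  clear_value E M
  have hle0 : Ioo (0:ℝ) ℓ₀ ≤ᵐ[volume] Ioo (0:ℝ) 1 := by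
    rw [ae_le_set, diff_eq_empty.mpr hsub0]; simp
  have hle1 : Ioo (1 - ℓ₀) 1 ≤ᵐ[volume] Ioo (0:ℝ) 1 := by
    rw [ae_le_set, diff_eq_empty.mpr hsub1]; simp
  have hnn2 : ∀ᵐ x ∂volume.restrict (Ioo (0:ℝ) 1), 0 ≤ e x ^ 2 * ρ x := by
    filter_upwards [hρnn] with x hx1 using mul_nonneg (sq_nonneg _) hx1
  have hb0 : e 0 ^ 2 ≤ θ * E + Q₀ := by
    by_cases hcase : e 0 ^ 2 ≤ θ * E
    · linarith only [hcase, hQ₀pos]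
    push_neg at hcase
    set N : ℝ := |e 0| with hNdef
    have hN2 : N ^ 2 = e 0 ^ 2 := sq_abs _
    have hNpos : 0 < N := by
      rcases lt_or_eq_of_le (abs_nonneg (e 0)) with h | h
      · exact h
      · exfalso
        have he00 : e 0 = 0 := abs_eq_zero.1 h.symm
        rw [he00] at hcase
        have : (0:ℝ)^2 = 0 := by norm_num
        rw [this] at hcase
        exact absurd hcase (not_lt.2 (mul_nonneg hθpos.le hE0))
    have hθEN : θ * E ≤ N ^ 2 := by rw [hN2]; exact hcase.le
    set s : ℝ := 2 * E / N + N / 8 with hsdef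
    have hspos : 0 < s := by positivity
    have hEsle : E / s ≤ N / 2 := by
      rw [div_le_iff₀ hspos]
      have hid : N / 2 * s = E + N ^ 2 / 16 := by rw [hsdef]; field_simp; ring
      rw [hid]
      linarith only [sq_nonneg N]
    have hls : ℓ₀ * s ≤ N / 2 + N / 256 := by
      have hid : ℓ₀ * s = θ * E / (2 * N) + θ * N / 32 := by
        rw [hsdef, hℓdef]; field_simp; ring
      have hA : θ * E / (2 * N) ≤ N / 2 := by
        rw [div_le_iff₀ (by positivity)]
        have hid2 : N / 2 * (2 * N) = N ^ 2 := by ring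
        rw [hid2]; exact hθEN
      have hB : θ * N / 32 ≤ N / 256 := by
        have : θ * N ≤ 1 / 8 * N := mul_le_mul_of_nonneg_right hθ8 hNpos.le
        linarith only [this]
      rw [hid]; linarith only [hA, hB]
    clear_value s N
    have hstay : ∀ x ∈ Icc (0:ℝ) ℓ₀, N / 4 ≤ |e x| := by
      intro x hx
      have hxI : x ∈ Icc (0:ℝ) 1 := ⟨hx.1, hx.2.trans (by linarith only [hℓ1])⟩
      have h1 : e x - e 0 = ∫ t in (0:ℝ)..x, e' t := heab 0 x h0I hxI
      have h2 := key s hspos 0 x le_rfl hx.1 hxI.2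
      have h3 : |∫ t in (0:ℝ)..x, e' t| ≤ ∫ t in (0:ℝ)..x, |e' t| :=
        intervalIntegral.abs_integral_le_integral_abs hx.1
      have h4 : (x - 0) * s ≤ ℓ₀ * s := mul_le_mul_of_nonneg_right (by linarith only [hx.2]) hspos.le
      have h5 : |e x - e 0| ≤ N / 2 + N / 256 / 2 := by
        rw [h1]
        refine h3.trans (h2.trans ?_)
        linarith only [h4, hls, hEsle, hNpos]
      have h6 := abs_sub_abs_le_abs_sub (e 0) (e x)
      rw [abs_sub_comm (e 0) (e x)] at h6
      linarith only [h5, h6, hNpos, hNdef]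
    have hsq : ∀ x ∈ Ioo (0:ℝ) ℓ₀, N ^ 2 / 16 ≤ e x ^ 2 := by
      intro x hx
      have h8 := hstay x ⟨hx.1.le, hx.2.le⟩
      have h9 : (N / 4) ^ 2 ≤ |e x| ^ 2 := pow_le_pow_left₀ (by positivity) h8 2
      rw [sq_abs] at h9
      calc N ^ 2 / 16 = (N / 4) ^ 2 := by ring
        _ ≤ e x ^ 2 := h9
    have hint1 : N ^ 2 / 16 * φ₀ ≤ ∫ x in Ioo (0:ℝ) ℓ₀, e x ^ 2 * ρ x := by
      have e1 : N ^ 2 / 16 * φ₀ = ∫ x in Ioo (0:ℝ) ℓ₀, N ^ 2 / 16 * ρ x := by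
        rw [hφ₀def, integral_const_mul]
      rw [e1]
      refine integral_mono_ae ((hρint.mono_set hsub0).const_mul _) (hnormInt.mono_set hsub0) ?_
      filter_upwards [ae_restrict_of_ae_restrict_of_subset hsub0 hρnn,
        ae_restrict_mem measurableSet_Ioo] with x hx1 hx2
      exact mul_le_mul_of_nonneg_right (hsq x hx2) hx1
    have hint2 : (∫ x in Ioo (0:ℝ) ℓ₀, e x ^ 2 * ρ x) ≤ 1 :=
      le_trans (setIntegral_mono_set hnormInt hnn2 hle0) (le_of_eq hnorm)
    have h9 : N ^ 2 ≤ Q₀ := by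
      rw [hQ₀def, le_div_iff₀ hφ₀pos]
      have h10 : N ^ 2 / 16 * φ₀ ≤ 1 := hint1.trans hint2
      linarith only [h10]
    rw [← hN2]
    linarith only [h9, mul_nonneg hθpos.le hE0]
  have hb1 : e 1 ^ 2 ≤ θ * E + Q₁ := by
    by_cases hcase : e 1 ^ 2 ≤ θ * E
    · linarith only [hcase, hQ₁pos]
    push_neg at hcase
    set N : ℝ := |e 1| with hNdef
    have hN2 : N ^ 2 = e 1 ^ 2 := sq_abs _
    have hNpos : 0 < N := by
      rcases lt_or_eq_of_le (abs_nonneg (e 1)) with h | h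
      · exact h
      · exfalso
        have he00 : e 1 = 0 := abs_eq_zero.1 h.symm
        rw [he00] at hcase
        have : (0:ℝ)^2 = 0 := by norm_num
        rw [this] at hcase
        exact absurd hcase (not_lt.2 (mul_nonneg hθpos.le hE0))
    have hθEN : θ * E ≤ N ^ 2 := by rw [hN2]; exact hcase.le
    set s : ℝ := 2 * E / N + N / 8 with hsdef
    have hspos : 0 < s := by positivity
    have hEsle : E / s ≤ N / 2 := by
      rw [div_le_iff₀ hspos]
      have hid : N / 2 * s = E + N ^ 2 / 16 := by rw [hsdef]; field_simp; ring
      rw [hid]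
      linarith only [sq_nonneg N]
    have hls : ℓ₀ * s ≤ N / 2 + N / 256 := by
      have hid : ℓ₀ * s = θ * E / (2 * N) + θ * N / 32 := by
        rw [hsdef, hℓdef]; field_simp; ring
      have hA : θ * E / (2 * N) ≤ N / 2 := by
        rw [div_le_iff₀ (by positivity)]
        have hid2 : N / 2 * (2 * N) = N ^ 2 := by ring
        rw [hid2]; exact hθEN
      have hB : θ * N / 32 ≤ N / 256 := by
        have : θ * N ≤ 1 / 8 * N := mul_le_mul_of_nonneg_right hθ8 hNpos.le
        linarith only [this]
      rw [hid]; linarith only [hA, hB]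
    clear_value s N
    have hstay : ∀ x ∈ Icc (1 - ℓ₀) 1, N / 4 ≤ |e x| := by
      intro x hx
      have hxI : x ∈ Icc (0:ℝ) 1 := ⟨by linarith only [hx.1, hℓ1], hx.2⟩
      have h1 : e 1 - e x = ∫ t in x..1, e' t := heab x 1 hxI h1I
      have h2 := key s hspos x 1 hxI.1 hxI.2 le_rfl
      have h3 : |∫ t in x..1, e' t| ≤ ∫ t in x..1, |e' t| :=
        intervalIntegral.abs_integral_le_integral_abs hxI.2
      have h4 : (1 - x) * s ≤ ℓ₀ * s := mul_le_mul_of_nonneg_right (by linarith only [hx.1]) hspos.le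
      have h5 : |e 1 - e x| ≤ N / 2 + N / 256 / 2 := by
        rw [h1]
        refine h3.trans (h2.trans ?_)
        linarith only [h4, hls, hEsle, hNpos]
      have h6 := abs_sub_abs_le_abs_sub (e 1) (e x)
      linarith only [h5, h6, hNpos, hNdef]
    have hsq : ∀ x ∈ Ioo (1 - ℓ₀) 1, N ^ 2 / 16 ≤ e x ^ 2 := by
      intro x hx
      have h8 := hstay x ⟨hx.1.le, hx.2.le⟩
      have h9 : (N / 4) ^ 2 ≤ |e x| ^ 2 := pow_le_pow_left₀ (by positivity) h8 2
      rw [sq_abs] at h9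
      calc N ^ 2 / 16 = (N / 4) ^ 2 := by ring
        _ ≤ e x ^ 2 := h9
    have hint1 : N ^ 2 / 16 * φ₁ ≤ ∫ x in Ioo (1 - ℓ₀) 1, e x ^ 2 * ρ x := by
      have e1 : N ^ 2 / 16 * φ₁ = ∫ x in Ioo (1 - ℓ₀) 1, N ^ 2 / 16 * ρ x := by
        rw [hφ₁def, integral_const_mul]
      rw [e1]
      refine integral_mono_ae ((hρint.mono_set hsub1).const_mul _) (hnormInt.mono_set hsub1) ?_
      filter_upwards [ae_restrict_of_ae_restrict_of_subset hsub1 hρnn,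
        ae_restrict_mem measurableSet_Ioo] with x hx1 hx2
      exact mul_le_mul_of_nonneg_right (hsq x hx2) hx1
    have hint2 : (∫ x in Ioo (1 - ℓ₀) 1, e x ^ 2 * ρ x) ≤ 1 :=
      le_trans (setIntegral_mono_set hnormInt hnn2 hle1) (le_of_eq hnorm)
    have h9 : N ^ 2 ≤ Q₁ := by
      rw [hQ₁def, le_div_iff₀ hφ₁pos]
      have h10 : N ^ 2 / 16 * φ₁ ≤ 1 := hint1.trans hint2
      linarith only [h10]
    rw [← hN2]
    linarith only [h9, mul_nonneg hθpos.le hE0]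
  have hIoo : ∀ f : ℝ → ℝ, ∀ a x : ℝ, a ≤ x →
      (∫ t in Ioo a x, f t) = ∫ t in a..x, f t := by
    intro f a x hx
    rw [intervalIntegral.integral_of_le hx, ← integral_Ioc_eq_integral_Ioo]
  have hg01 : ∫ t in (0:ℝ)..1, g t = e' 1 - e' 0 := by
    have h5 := he' 1 h1I
    linarith only [h5]
  have he01 : ∫ t in (0:ℝ)..1, e' t = e 1 - e 0 := (heab 0 1 h0I h1I).symm
  have hgeInt : IntegrableOn (fun t => g t * e t) (Ioo (0:ℝ) 1) volume := by
    have hfe : (fun t => g t * e t) = fun t => -(lam * (e t ^ 2 * ρ t)) := by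
      funext t; rw [hgdef]; ring
    rw [hfe]; exact (hnormInt.const_mul lam).neg
  have hEid : E = e 1 * e' 1 - e 0 * e' 0 + lam := by
    set K : ℝ → ℝ → ℝ := fun x t => if t < x then e' x * g t else 0 with hKdef
    have hKint : Integrable (Function.uncurry K)
        ((volume.restrict (Ioo (0:ℝ) 1)).prod (volume.restrict (Ioo (0:ℝ) 1))) := by
      have h1' : Integrable (fun z : ℝ × ℝ => e' z.1 * g z.2)
          ((volume.restrict (Ioo (0:ℝ) 1)).prod (volume.restrict (Ioo (0:ℝ) 1))) :=
        Integrable.mul_prod he'IntIoo hgIntIoo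
      have h2' : Function.uncurry K
          = ({z : ℝ × ℝ | z.2 < z.1}).indicator (fun z : ℝ × ℝ => e' z.1 * g z.2) := by
        funext z
        by_cases h : z.2 < z.1 <;> simp [Function.uncurry, hKdef, Set.indicator_apply, h]
      rw [h2']
      exact h1'.indicator (measurableSet_lt measurable_snd measurable_fst)
    have hswap := MeasureTheory.integral_integral_swap hKint
    have hL : (∫ x in Ioo (0:ℝ) 1, ∫ t in Ioo (0:ℝ) 1, K x t)
        = E - e' 0 * (e 1 - e 0) := by
      have hLx : ∀ x ∈ Ioo (0:ℝ) 1, (∫ t in Ioo (0:ℝ) 1, K x t) = e' x * (e' x - e' 0) := by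
        intro x hx
        have h3 : (fun t => K x t) = (Iio x).indicator (fun t => e' x * g t) := by
          funext t
          by_cases h : t < x <;> simp [hKdef, Set.indicator_apply, mem_Iio, h]
        rw [h3, integral_indicator measurableSet_Iio,
          Measure.restrict_restrict measurableSet_Iio]
        have h4 : Iio x ∩ Ioo (0:ℝ) 1 = Ioo 0 x := by
          ext t
          simp only [mem_inter_iff, mem_Iio, mem_Ioo]
          constructor
          · rintro ⟨h1', h2', _⟩; exact ⟨h2', h1'⟩
          · rintro ⟨h1', h2'⟩; exact ⟨h2', h1', h2'.trans hx.2⟩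
        rw [h4, integral_const_mul, hIoo g 0 x hx.1.le]
        have h5 := he' x (Ioo_subset_Icc_self hx)
        have h6 : (∫ t in (0:ℝ)..x, g t) = e' x - e' 0 := by linarith only [h5]
        rw [h6]
      calc (∫ x in Ioo (0:ℝ) 1, ∫ t in Ioo (0:ℝ) 1, K x t)
          = ∫ x in Ioo (0:ℝ) 1, e' x * (e' x - e' 0) :=
            setIntegral_congr_fun measurableSet_Ioo hLx
        _ = E - e' 0 * (e 1 - e 0) := by
            have hsplit : ∀ x : ℝ, e' x * (e' x - e' 0) = e' x ^ 2 - e' 0 * e' x :=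
              fun x => by ring
            simp_rw [hsplit]
            rw [integral_sub he'sqIntIoo (he'IntIoo.const_mul _), integral_const_mul,
              hIoo e' 0 1 (by norm_num), he01, ← hEdef]
    have hR : (∫ t in Ioo (0:ℝ) 1, ∫ x in Ioo (0:ℝ) 1, K x t)
        = e 1 * (e' 1 - e' 0) + lam := by
      have hRt : ∀ t ∈ Ioo (0:ℝ) 1, (∫ x in Ioo (0:ℝ) 1, K x t) = g t * (e 1 - e t) := by
        intro t ht
        have h3 : (fun x => K x t) = (Ioi t).indicator (fun x => e' x * g t) := by
          funext x
          by_cases h : t < x <;> simp [hKdef, Set.indicator_apply, mem_Ioi, h]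
        rw [h3, integral_indicator measurableSet_Ioi,
          Measure.restrict_restrict measurableSet_Ioi]
        have h4 : Ioi t ∩ Ioo (0:ℝ) 1 = Ioo t 1 := by
          ext x
          simp only [mem_inter_iff, mem_Ioi, mem_Ioo]
          constructor
          · rintro ⟨h1', _, h2'⟩; exact ⟨h1', h2'⟩
          · rintro ⟨h1', h2'⟩; exact ⟨h1', ht.1.trans h1', h2'⟩
        rw [h4, integral_mul_const, hIoo e' t 1 ht.2.le,
          ← heab t 1 (Ioo_subset_Icc_self ht) h1I]
        ring
      calc (∫ t in Ioo (0:ℝ) 1, ∫ x in Ioo (0:ℝ) 1, K x t)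
          = ∫ t in Ioo (0:ℝ) 1, g t * (e 1 - e t) :=
            setIntegral_congr_fun measurableSet_Ioo hRt
        _ = e 1 * (e' 1 - e' 0) + lam := by
            have hsplit : ∀ t : ℝ, g t * (e 1 - e t) = e 1 * g t - g t * e t :=
              fun t => by ring
            simp_rw [hsplit]
            rw [integral_sub (hgIntIoo.const_mul _) hgeInt, integral_const_mul]
            have h7 : (∫ t in Ioo (0:ℝ) 1, g t) = e' 1 - e' 0 := by
              rw [hIoo g 0 1 (by norm_num), hg01]
            have h8 : (∫ t in Ioo (0:ℝ) 1, g t * e t) = -lam := by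
              have hfe : (fun t => g t * e t) = fun t => -(lam * (e t ^ 2 * ρ t)) := by
                funext t; rw [hgdef]; ring
              rw [hfe, integral_neg, integral_const_mul, hnorm, mul_one]
            rw [h7, h8]
            ring
    rw [hL, hR] at hswap
    linear_combination hswap
  have hBbd : e 1 * e' 1 - e 0 * e' 0 ≤ c₀ * e 0 ^ 2 + c₁ * e 1 ^ 2 := by
    have hterm0 : -(e 0 * e' 0) ≤ c₀ * e 0 ^ 2 := by
      by_cases hβ : β₀ = 0
      · have hα : α₀ ≠ 0 := by
          intro hα
          exact h0 (by rw [hα, hβ])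
        have he0 : e 0 = 0 := by
          rw [hβ] at hbc0
          have h5 : α₀ * e 0 = 0 := by linarith only [hbc0]
          rcases mul_eq_zero.1 h5 with h | h
          · exact absurd h hα
          · exact h
        rw [he0]
        have : c₀ * (0:ℝ) ^ 2 = 0 := by ring
        rw [this]
        norm_num
      · have he'0 : e' 0 = -(α₀ / β₀) * e 0 := by
          field_simp
          linarith only [hbc0]
        calc -(e 0 * e' 0) = (α₀ / β₀) * e 0 ^ 2 := by rw [he'0]; ring
          _ ≤ |α₀ / β₀| * e 0 ^ 2 := mul_le_mul_of_nonneg_right (le_abs_self _) (sq_nonneg _)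
          _ = c₀ * e 0 ^ 2 := by rw [hc₀def, abs_div]
    have hterm1 : e 1 * e' 1 ≤ c₁ * e 1 ^ 2 := by
      by_cases hβ : β₁ = 0
      · have hα : α₁ ≠ 0 := by
          intro hα
          exact h1 (by rw [hα, hβ])
        have he1 : e 1 = 0 := by
          rw [hβ] at hbc1
          have h5 : α₁ * e 1 = 0 := by linarith only [hbc1]
          rcases mul_eq_zero.1 h5 with h | h
          · exact absurd h hα
          · exact h
        rw [he1]
        have : c₁ * (0:ℝ) ^ 2 = 0 := by ring
        rw [this]
        norm_num
      · have he'1 : e' 1 = -(α₁ / β₁) * e 1 := by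
          field_simp
          linarith only [hbc1]
        calc e 1 * e' 1 = -(α₁ / β₁) * e 1 ^ 2 := by rw [he'1]; ring
          _ ≤ |α₁ / β₁| * e 1 ^ 2 :=
            mul_le_mul_of_nonneg_right (neg_le_abs _) (sq_nonneg _)
          _ = c₁ * e 1 ^ 2 := by rw [hc₁def, abs_div]
    linarith only [hterm0, hterm1]
  have hEbd : E ≤ D₁ * lam := by
    have t0 : c₀ * e 0 ^ 2 ≤ c₀ * (θ * E + Q₀) := mul_le_mul_of_nonneg_left hb0 hc₀
    have t1 : c₁ * e 1 ^ 2 ≤ c₁ * (θ * E + Q₁) := mul_le_mul_of_nonneg_left hb1 hc₁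
    have h2' : c₀ * (θ * E) + c₁ * (θ * E) ≤ 1 / 8 * E := by
      have h3' := mul_le_mul_of_nonneg_right hθc hE0
      calc c₀ * (θ * E) + c₁ * (θ * E) = ((c₀ + c₁) * θ) * E := by ring
        _ ≤ 1 / 8 * E := h3'
    have h1' : E ≤ lam + 1 / 8 * E + C₄ := by
      rw [hC₄def]
      have expand0 : c₀ * (θ * E + Q₀) = c₀ * (θ * E) + c₀ * Q₀ := by ring
      have expand1 : c₁ * (θ * E + Q₁) = c₁ * (θ * E) + c₁ * Q₁ := by ring
      rw [expand0] at t0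
      rw [expand1] at t1
      linarith only [hEid, hBbd, t0, t1, h2']
    have h3' : E ≤ 2 * lam + 2 * C₄ := by linarith only [h1', hlam, hC₄]
    have h4' : 0 ≤ C₄ * (lam - 1) := mul_nonneg hC₄ (by linarith only [hlam])
    rw [hD₁def]
    have h5' : (2 + 2 * C₄) * lam = 2 * lam + 2 * C₄ + 2 * (C₄ * (lam - 1)) := by ring
    rw [h5']
    linarith only [h3', h4']
  have hlam0 : (0:ℝ) < lam := lt_of_lt_of_le one_pos hlam
  have hl32 : lam * Real.sqrt lam = lam ^ ((3:ℝ) / 2) := by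
    rw [show ((3:ℝ) / 2) = 1 + 1 / 2 by norm_num, Real.rpow_add hlam0, Real.rpow_one,
      Real.sqrt_eq_rpow]
  have hlam32nn : 0 ≤ lam ^ ((3:ℝ) / 2) := Real.rpow_nonneg hlam0.le _
  have hlamle : lam ≤ 1 + lam ^ ((3:ℝ) / 2) := by
    have h2' : lam ^ ((1:ℝ)) ≤ lam ^ ((3:ℝ) / 2) :=
      Real.rpow_le_rpow_of_exponent_le hlam (by norm_num)
    rw [Real.rpow_one] at h2'
    linarith only [h2']
  have honele : (0:ℝ) ≤ 1 + lam ^ ((3:ℝ) / 2) := by linarith only [hlam32nn]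
  rcases eq_or_ne β₀ 0 with hβ | hβ
  · -- β₀ = 0 : e 0 = 0, bound e' 0
    have hα : α₀ ≠ 0 := by
      intro hα
      exact h0 (by rw [hα, hβ])
    have he0 : e 0 = 0 := by
      rw [hβ] at hbc0
      have h5 : α₀ * e 0 = 0 := by linarith only [hbc0]
      rcases mul_eq_zero.1 h5 with h | h
      · exact absurd h hα
      · exact h
    obtain ⟨x₁, hx₁I, hx₁⟩ : ∃ x₁ ∈ Icc (0:ℝ) 1, e' x₁ ^ 2 ≤ E + 1 := by
      by_contra hcon
      push_neg at hcon
      have hlow : (∫ _x in Ioo (0:ℝ) 1, (E + 1)) ≤ ∫ x in Ioo (0:ℝ) 1, e' x ^ 2 := by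
        refine setIntegral_mono_on
          (integrableOn_const (by rw [Real.volume_Ioo]; exact ENNReal.ofReal_lt_top.ne))
          he'sqIntIoo measurableSet_Ioo ?_
        intro x hx
        exact (hcon x (Ioo_subset_Icc_self hx)).le
      rw [setIntegral_const, Real.volume_real_Ioo] at hlow
      rw [show max ((1:ℝ) - 0) 0 = 1 by norm_num, one_smul] at hlow
      rw [← hEdef] at hlow
      linarith only [hlow]
    have hMbd : ∀ x ∈ Icc (0:ℝ) 1, |e x| ≤ Real.sqrt (E + 1) := by
      intro x hx
      have h5 := hM2 x hx
      rw [he0] at h5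
      simpa using h5
    have hset : Ioc (0:ℝ) x₁ ≤ᵐ[volume] Ioo (0:ℝ) 1 := by
      rw [ae_le_set]
      refine measure_mono_null ?_ (measure_singleton (1:ℝ))
      intro x hx
      simp only [mem_diff, mem_Ioc, mem_Ioo, not_and, not_lt] at hx
      have hx1 : x = 1 := le_antisymm (hx.1.2.trans hx₁I.2) (hx.2 hx.1.1)
      simp [hx1]
    have habs : |∫ t in (0:ℝ)..x₁, g t| ≤ lam * Real.sqrt (E + 1) * R := by
      have h6 : |∫ t in (0:ℝ)..x₁, g t| ≤ ∫ t in (0:ℝ)..x₁, |g t| :=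
        intervalIntegral.abs_integral_le_integral_abs hx₁I.1
      have h7 : (∫ t in (0:ℝ)..x₁, |g t|) = ∫ t in Ioc (0:ℝ) x₁, |g t| :=
        intervalIntegral.integral_of_le hx₁I.1
      have h8 : (∫ t in Ioc (0:ℝ) x₁, |g t|) ≤ ∫ t in Ioo (0:ℝ) 1, |g t| :=
        setIntegral_mono_set hgIntIoo.abs
          (Eventually.of_forall fun t => abs_nonneg _) hset
      have h9 : (∫ t in Ioo (0:ℝ) 1, |g t|)
          ≤ ∫ t in Ioo (0:ℝ) 1, lam * Real.sqrt (E + 1) * ρ t := by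
        refine integral_mono_ae hgIntIoo.abs (hρint.const_mul _) ?_
        filter_upwards [hρnn, ae_restrict_mem measurableSet_Ioo] with t ht1 ht2
        have h10 : |e t| ≤ Real.sqrt (E + 1) := hMbd t (Ioo_subset_Icc_self ht2)
        have h11 : |g t| = lam * ρ t * |e t| := by
          rw [hgdef, abs_neg, abs_mul, abs_mul, abs_of_nonneg hlam0.le, abs_of_nonneg ht1]
        rw [h11]
        calc lam * ρ t * |e t| ≤ lam * ρ t * Real.sqrt (E + 1) :=
              mul_le_mul_of_nonneg_left h10 (mul_nonneg hlam0.le ht1)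
          _ = lam * Real.sqrt (E + 1) * ρ t := by ring
      have h10 : (∫ t in Ioo (0:ℝ) 1, lam * Real.sqrt (E + 1) * ρ t)
          = lam * Real.sqrt (E + 1) * R := by
        rw [integral_const_mul, ← hRdef]
      calc |∫ t in (0:ℝ)..x₁, g t| ≤ ∫ t in (0:ℝ)..x₁, |g t| := h6
        _ = ∫ t in Ioc (0:ℝ) x₁, |g t| := h7
        _ ≤ ∫ t in Ioo (0:ℝ) 1, |g t| := h8
        _ ≤ ∫ t in Ioo (0:ℝ) 1, lam * Real.sqrt (E + 1) * ρ t := h9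
        _ = lam * Real.sqrt (E + 1) * R := h10
    have h11 : |e' x₁| ≤ (E + 2) / 2 := by
      have h12 : |e' x₁| ^ 2 ≤ E + 1 := by rw [sq_abs]; exact hx₁
      have hexp : (|e' x₁| - 1) ^ 2 = |e' x₁| ^ 2 - 2 * |e' x₁| + 1 := by ring
      linarith only [sq_nonneg (|e' x₁| - 1), hexp, h12]
    have he'0bd : |e' 0| ≤ (E + 2) / 2 + lam * Real.sqrt (E + 1) * R := by
      have h5 := he' x₁ hx₁I
      have h13 : e' 0 = e' x₁ - ∫ t in (0:ℝ)..x₁, g t := by linarith only [h5]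
      rw [h13]
      have h14 : |e' x₁ - ∫ t in (0:ℝ)..x₁, g t| ≤ |e' x₁| + |∫ t in (0:ℝ)..x₁, g t| := by
        rw [sub_eq_add_neg]
        refine (abs_add_le _ _).trans ?_
        rw [abs_neg]
      linarith only [h14, h11, habs]
    -- assemble
    have hE2 : (E + 2) / 2 ≤ (D₁ + 2) / 2 * lam := by
      have : E + 2 ≤ D₁ * lam + 2 * lam := by linarith only [hEbd, hlam]
      linarith only [this]
    have hsq2 : Real.sqrt (E + 1) ≤ Real.sqrt (D₁ + 1) * Real.sqrt lam := by
      have h15 : E + 1 ≤ (D₁ + 1) * lam := by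
        have : D₁ * lam + 1 ≤ D₁ * lam + lam := by linarith only [hlam]
        linarith only [hEbd, this]
      calc Real.sqrt (E + 1) ≤ Real.sqrt ((D₁ + 1) * lam) := Real.sqrt_le_sqrt h15
        _ = Real.sqrt (D₁ + 1) * Real.sqrt lam := Real.sqrt_mul (by linarith only [hD₁]) _
    have hterm : lam * Real.sqrt (E + 1) * R ≤ R * Real.sqrt (D₁ + 1) * lam ^ ((3:ℝ) / 2) := by
      have h16 : lam * Real.sqrt (E + 1) ≤ lam * (Real.sqrt (D₁ + 1) * Real.sqrt lam) :=
        mul_le_mul_of_nonneg_left hsq2 hlam0.le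
      have h17 : lam * (Real.sqrt (D₁ + 1) * Real.sqrt lam)
          = Real.sqrt (D₁ + 1) * (lam * Real.sqrt lam) := by ring
      rw [h17, hl32] at h16
      calc lam * Real.sqrt (E + 1) * R ≤ Real.sqrt (D₁ + 1) * lam ^ ((3:ℝ) / 2) * R :=
            mul_le_mul_of_nonneg_right h16 hR0
        _ = R * Real.sqrt (D₁ + 1) * lam ^ ((3:ℝ) / 2) := by ring
    have hζ : |β₀ * e 0 - α₀ * e' 0| = |α₀| * |e' 0| := by
      rw [hβ, he0]
      rw [show (0:ℝ) * 0 - α₀ * e' 0 = -(α₀ * e' 0) by ring, abs_neg, abs_mul]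
    rw [hζ]
    have hfin : |e' 0| ≤ ((D₁ + 2) / 2 + R * Real.sqrt (D₁ + 1)) * (1 + lam ^ ((3:ℝ) / 2)) := by
      have hc1' : 0 ≤ (D₁ + 2) / 2 := by linarith only [hD₁]
      have hc2' : 0 ≤ R * Real.sqrt (D₁ + 1) := mul_nonneg hR0 (Real.sqrt_nonneg _)
      have hA1 : (D₁ + 2) / 2 * lam ≤ (D₁ + 2) / 2 * (1 + lam ^ ((3:ℝ) / 2)) :=
        mul_le_mul_of_nonneg_left hlamle hc1'
      have hA2 : R * Real.sqrt (D₁ + 1) * lam ^ ((3:ℝ) / 2)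
          ≤ R * Real.sqrt (D₁ + 1) * (1 + lam ^ ((3:ℝ) / 2)) :=
        mul_le_mul_of_nonneg_left (by linarith only [hlam32nn]) hc2'
      have := he'0bd.trans (by linarith only [hE2, hterm] :
        (E + 2) / 2 + lam * Real.sqrt (E + 1) * R
          ≤ (D₁ + 2) / 2 * lam + R * Real.sqrt (D₁ + 1) * lam ^ ((3:ℝ) / 2))
      calc |e' 0| ≤ (D₁ + 2) / 2 * lam + R * Real.sqrt (D₁ + 1) * lam ^ ((3:ℝ) / 2) := this
        _ ≤ (D₁ + 2) / 2 * (1 + lam ^ ((3:ℝ) / 2))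
            + R * Real.sqrt (D₁ + 1) * (1 + lam ^ ((3:ℝ) / 2)) := by
            linarith only [hA1, hA2]
        _ = ((D₁ + 2) / 2 + R * Real.sqrt (D₁ + 1)) * (1 + lam ^ ((3:ℝ) / 2)) := by ring
    calc |α₀| * |e' 0|
        ≤ |α₀| * (((D₁ + 2) / 2 + R * Real.sqrt (D₁ + 1)) * (1 + lam ^ ((3:ℝ) / 2))) :=
          mul_le_mul_of_nonneg_left hfin (abs_nonneg _)
      _ = CB * (1 + lam ^ ((3:ℝ) / 2)) := by rw [hCBdef]; ring
      _ ≤ (1 + CA + CB) * (1 + lam ^ ((3:ℝ) / 2)) := by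
          have h20 : CB * (1 + lam ^ ((3:ℝ) / 2)) + (1 + CA) * (1 + lam ^ ((3:ℝ) / 2))
              = (1 + CA + CB) * (1 + lam ^ ((3:ℝ) / 2)) := by ring
          have h21 : 0 ≤ (1 + CA) * (1 + lam ^ ((3:ℝ) / 2)) :=
            mul_nonneg (by linarith only [hCA]) honele
          linarith only [h20, h21]
  · -- β₀ ≠ 0
    have he'0 : e' 0 = -(α₀ / β₀) * e 0 := by
      field_simp
      linarith only [hbc0]
    have hζ : β₀ * e 0 - α₀ * e' 0 = (α₀ ^ 2 + β₀ ^ 2) / β₀ * e 0 := by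
      rw [he'0]
      field_simp
      ring
    have habs0 : |β₀ * e 0 - α₀ * e' 0| = K₀ * |e 0| := by
      rw [hζ, abs_mul, abs_div, hK₀def]
      congr 2
      rw [abs_of_nonneg (by positivity : (0:ℝ) ≤ α₀ ^ 2 + β₀ ^ 2)]
    have he0bd : |e 0| ≤ (1 + θ * D₁ + Q₀) / 2 * lam := by
      have h12 : |e 0| ^ 2 ≤ θ * E + Q₀ := by rw [sq_abs]; exact hb0
      have hexp : (|e 0| - 1) ^ 2 = |e 0| ^ 2 - 2 * |e 0| + 1 := by ring
      have h13 : |e 0| ≤ (1 + (θ * E + Q₀)) / 2 := by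
        linarith only [sq_nonneg (|e 0| - 1), hexp, h12]
      have h14 : θ * E ≤ θ * (D₁ * lam) := mul_le_mul_of_nonneg_left hEbd hθpos.le
      have h15 : 1 + Q₀ ≤ (1 + Q₀) * lam := by
        have := mul_le_mul_of_nonneg_left hlam (by linarith only [hQ₀pos] : (0:ℝ) ≤ 1 + Q₀)
        linarith only [this]
      have h16 : (1 + (θ * E + Q₀)) / 2 ≤ (1 + θ * D₁ + Q₀) / 2 * lam := by
        have h17 : θ * (D₁ * lam) = (θ * D₁) * lam := by ring
        rw [h17] at h14
        linarith only [h13, h14, h15]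
      linarith only [h13, h16]
    rw [habs0]
    calc K₀ * |e 0| ≤ K₀ * ((1 + θ * D₁ + Q₀) / 2 * lam) :=
          mul_le_mul_of_nonneg_left he0bd hK₀
      _ = CA * lam := by rw [hCAdef]; ring
      _ ≤ CA * (1 + lam ^ ((3:ℝ) / 2)) := mul_le_mul_of_nonneg_left hlamle hCA
      _ ≤ (1 + CA + CB) * (1 + lam ^ ((3:ℝ) / 2)) := by
          have h20 : CA * (1 + lam ^ ((3:ℝ) / 2)) + (1 + CB) * (1 + lam ^ ((3:ℝ) / 2))
              = (1 + CA + CB) * (1 + lam ^ ((3:ℝ) / 2)) := by ring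
          have h21 : 0 ≤ (1 + CB) * (1 + lam ^ ((3:ℝ) / 2)) :=
            mul_nonneg (by linarith only [hCB]) honele
          linarith only [h20, h21]
end
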